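/- arXiv:2307.06054 — 6 statements merged into one kernel-verified Lean document; each statement's English description precedes it below -/
import Mathlib

section
/- Let G be a d-regular graph with an even number of vertices and let (R,B) be a balanced colouring of G. Then the pair (P_2(R), P_2(B)) lies in the region D_d ⊆ [0,1]², where D_d is the convex hull of the 2d+2 points { (l/d, l²/d²) : 0 ≤ l ≤ d } ∪ { (l²/d², l/d) : 0 ≤ l ≤ d }. -/
/-!
Both colour classes have the same size and, counting the edges between `R` and `B` twice, the
same total inner degree; let `x` be the common mean inner degree and `l ≤ x ≤ l + 1` with
`l + 1 ≤ d`. Every integer `k ∈ [0, d]` satisfies `(2l+1)k - l(l+1) ≤ k² ≤ d k`, since the secant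
of the parabola through `l` and `l + 1` lies below it at integers. Averaging puts both `P₂(R)`
and `P₂(B)` in `[α, x/d]` with `α = ((2l+1)x - l(l+1))/d²`. The square `[α, x/d]²` lies in `D_d`:
two corners are on the diagonal segment from `(0,0)` to `(1,1)`, and `(x/d, α)` is on the edge
of `D_d` joining the vertices for `l` and `l + 1`, with `(α, x/d)` its mirror image.
-/

open Finset
open scoped Classical

/-- The number of neighbours of `v` lying in `R` (the degree of `v` into `R`). -/
noncomputable def degIn {V : Type*} (G : SimpleGraph V) (R : Finset V) (v : V) : ℕ :=
  (R.filter (fun w => G.Adj v w)).card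

/-- `P₂(R)`: the probability that a random walk started at a uniform vertex of `R`
stays in `R` for two steps, in a `d`-regular graph. -/
noncomputable def P2 {V : Type*} (G : SimpleGraph V) (d : ℕ) (R : Finset V) : ℝ :=
  (∑ v ∈ R, (degIn G R v : ℝ) ^ 2) / (R.card * d ^ 2)

section DegIn

variable {V : Type*} (G : SimpleGraph V)

theorem sum_degIn_comm (R B : Finset V) :
    ∑ v ∈ R, degIn G B v = ∑ v ∈ B, degIn G R v := by
  simp only [degIn, card_filter]
  rw [sum_comm]
  exact sum_congr rfl fun _ _ => sum_congr rfl fun _ _ => by rw [G.adj_comm]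

variable [Fintype V] {G} {d : ℕ}

theorem degIn_le (hreg : G.IsRegularOfDegree d) (R : Finset V) (v : V) : degIn G R v ≤ d := by
  rw [← hreg v, ← G.card_neighborFinset_eq_degree, G.neighborFinset_eq_filter]
  exact card_le_card (filter_subset_filter _ (subset_univ R))

theorem degIn_add_degIn (hreg : G.IsRegularOfDegree d) {R B : Finset V}
    (hcov : ∀ v, v ∈ R ∨ v ∈ B) (hdisj : Disjoint R B) (v : V) :
    degIn G R v + degIn G B v = d := by
  have huniv : R ∪ B = univ := eq_univ_of_forall fun v => mem_union.2 (hcov v)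
  rw [degIn, degIn, ← card_union_of_disjoint (disjoint_filter_filter hdisj), ← filter_union,
    huniv, ← G.neighborFinset_eq_filter, G.card_neighborFinset_eq_degree, hreg v]

theorem sum_degIn_eq_of_card_eq (hreg : G.IsRegularOfDegree d) {R B : Finset V}
    (hcov : ∀ v, v ∈ R ∨ v ∈ B) (hdisj : Disjoint R B) (hbal : #R = #B) :
    ∑ v ∈ R, degIn G R v = ∑ v ∈ B, degIn G B v := by
  have hsum : ∀ X : Finset V, ∑ v ∈ X, (degIn G R v + degIn G B v) = #X * d := fun X => by
    simp [degIn_add_degIn hreg hcov hdisj]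
  have hR := hsum R
  have hB := hsum B
  rw [sum_add_distrib, sum_degIn_comm G R B, hbal] at hR
  rw [sum_add_distrib] at hB
  omega

end DegIn

theorem sum_sq_le_mul_sum {ι R : Type*} [CommSemiring R] [PartialOrder R] [IsOrderedRing R]
    (s : Finset ι) (f : ι → R) {c : R} (h0 : ∀ i ∈ s, 0 ≤ f i) (hc : ∀ i ∈ s, f i ≤ c) :
    ∑ i ∈ s, f i ^ 2 ≤ c * ∑ i ∈ s, f i := by
  rw [mul_sum]
  exact sum_le_sum fun i hi => by rw [sq]; exact mul_le_mul_of_nonneg_right (hc i hi) (h0 i hi)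

theorem secant_le_sum_sq {ι : Type*} (s : Finset ι) (f : ι → ℤ) (l : ℤ) :
    (2 * l + 1) * ∑ i ∈ s, f i - l * (l + 1) * #s ≤ ∑ i ∈ s, f i ^ 2 := by
  have h : ∀ i ∈ s, (2 * l + 1) * f i - l * (l + 1) ≤ f i ^ 2 := fun i _ => by
    nlinarith [Int.le_self_sq (f i - l)]
  calc _ = ∑ i ∈ s, ((2 * l + 1) * f i - l * (l + 1)) := by
        rw [sum_sub_distrib, ← mul_sum, sum_const, nsmul_eq_mul]; ring
    _ ≤ _ := sum_le_sum h

section P2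

variable {V : Type*} {G : SimpleGraph V} {d : ℕ}

variable (G d) in
theorem secant_le_P2 (X : Finset V) (l : ℕ) :
    ((2 * l + 1) * ((∑ v ∈ X, (degIn G X v : ℝ)) / #X) - l * (l + 1)) / d ^ 2 ≤ P2 G d X := by
  have h : (2 * l + 1) * ∑ v ∈ X, (degIn G X v : ℝ) - l * (l + 1) * #X ≤
      ∑ v ∈ X, (degIn G X v : ℝ) ^ 2 := by
    exact_mod_cast secant_le_sum_sq X (fun v => (degIn G X v : ℤ)) l
  rw [P2, ← div_div]
  refine div_le_div_of_nonneg_right ?_ (by positivity)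
  rcases X.eq_empty_or_nonempty with rfl | hX
  · simp only [sum_empty, card_empty, Nat.cast_zero, div_zero, mul_zero, zero_sub]
    exact neg_nonpos.2 (by positivity)
  · calc _ = ((2 * l + 1) * ∑ v ∈ X, (degIn G X v : ℝ) - l * (l + 1) * #X) / #X := by
          field_simp
      _ ≤ _ := div_le_div_of_nonneg_right h (by positivity)

variable [Fintype V]

theorem mean_degIn_le (hreg : G.IsRegularOfDegree d) (X : Finset V) :
    (∑ v ∈ X, (degIn G X v : ℝ)) / #X ≤ d := by
  refine div_le_of_le_mul₀ (by positivity) (by positivity) ?_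
  simpa [mul_comm] using
    sum_le_card_nsmul X _ (d : ℝ) fun v _ => by exact_mod_cast degIn_le hreg X v

theorem P2_le (hreg : G.IsRegularOfDegree d) (X : Finset V) :
    P2 G d X ≤ (∑ v ∈ X, (degIn G X v : ℝ)) / #X / d := by
  have h := sum_sq_le_mul_sum X (fun v => (degIn G X v : ℝ)) (c := d) (fun _ _ => by positivity)
    (fun v _ => by exact_mod_cast degIn_le hreg X v)
  rcases eq_or_ne (d : ℝ) 0 with hd | hd
  · simp [P2, hd]
  calc P2 G d X ≤ d * (∑ v ∈ X, (degIn G X v : ℝ)) / (#X * d ^ 2) :=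
        div_le_div_of_nonneg_right h (by positivity)
    _ = _ := by
        rw [div_div, show (#X : ℝ) * d ^ 2 = d * (#X * d) by ring, mul_div_mul_left _ _ hd]

end P2

theorem Convex.segment_prod_segment_subset {𝕜 E F : Type*} [Field 𝕜] [LinearOrder 𝕜]
    [IsStrictOrderedRing 𝕜] [AddCommGroup E] [Module 𝕜 E] [AddCommGroup F] [Module 𝕜 F]
    {s : Set (E × F)} (hs : Convex 𝕜 s) {a b : E} {c e : F} (hac : (a, c) ∈ s)
    (hae : (a, e) ∈ s) (hbc : (b, c) ∈ s) (hbe : (b, e) ∈ s) :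
    segment 𝕜 a b ×ˢ segment 𝕜 c e ⊆ s := by
  rw [← convexHull_pair, ← convexHull_pair, ← convexHull_prod]
  refine convexHull_min ?_ hs
  rintro ⟨x, y⟩ ⟨hx, hy⟩
  rcases hx with rfl | rfl <;> rcases hy with rfl | rfl <;> assumption

def regionD (d : ℕ) : Set (ℝ × ℝ) :=
  convexHull ℝ {p : ℝ × ℝ | ∃ l : ℕ, l ≤ d ∧
    (p = ((l : ℝ) / d, ((l : ℝ) / d) ^ 2) ∨ p = (((l : ℝ) / d) ^ 2, (l : ℝ) / d))}

namespace regionD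

variable {d : ℕ}

theorem convex : Convex ℝ (regionD d) := convex_convexHull ℝ _

theorem swap_mem {p : ℝ × ℝ} (hp : p ∈ regionD d) : p.swap ∈ regionD d := by
  let σ := (LinearEquiv.prodComm ℝ ℝ ℝ).toLinearMap
  have hσ : σ p ∈ σ '' regionD d := Set.mem_image_of_mem σ hp
  rw [regionD, LinearMap.image_convexHull] at hσ
  refine convexHull_mono ?_ hσ
  rintro _ ⟨q, ⟨l, hl, hq | hq⟩, rfl⟩ <;> exact ⟨l, hl, by simp [σ, hq]⟩

theorem parabola_mem {l : ℕ} (hl : l ≤ d) : ((l : ℝ) / d, ((l : ℝ) / d) ^ 2) ∈ regionD d :=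
  subset_convexHull ℝ _ (by exact ⟨l, hl, Or.inl rfl⟩)

theorem diag_mem (hd : d ≠ 0) {c : ℝ} (h0 : 0 ≤ c) (h1 : c ≤ 1) : (c, c) ∈ regionD d := by
  have h00 : ((0 : ℝ), (0 : ℝ)) ∈ regionD d := by simpa using parabola_mem (Nat.zero_le d)
  have h11 : ((1 : ℝ), (1 : ℝ)) ∈ regionD d := by simpa [hd] using parabola_mem (le_refl d)
  exact convex.segment_subset h00 h11 ⟨1 - c, c, by linarith, h0, by ring, by ext <;> simp⟩

theorem secant_mem {l : ℕ} (hl : l + 1 ≤ d) {x : ℝ} (hlx : l ≤ x) (hxl : x ≤ l + 1) :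
    (x / d, ((2 * l + 1) * x - l * (l + 1)) / d ^ 2) ∈ regionD d := by
  have hd : (d : ℝ) ≠ 0 := by norm_cast; omega
  refine convex.segment_subset (parabola_mem (l := l) (by omega)) (parabola_mem hl)
    ⟨l + 1 - x, x - l, by linarith, by linarith, by ring, ?_⟩
  simp only [Prod.smul_mk, Prod.mk_add_mk, smul_eq_mul, Nat.cast_add, Nat.cast_one]
  ext <;> field_simp <;> ring

end regionD

theorem exists_nat_le_le_add_one {x : ℝ} {d : ℕ} (hd : d ≠ 0) (hx0 : 0 ≤ x) (hxd : x ≤ d) :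
    ∃ l : ℕ, l + 1 ≤ d ∧ (l : ℝ) ≤ x ∧ x ≤ l + 1 := by
  rcases lt_or_ge x (d - 1 : ℕ) with h | h
  · exact ⟨⌊x⌋₊, by have := (Nat.floor_lt hx0).2 h; omega, Nat.floor_le hx0,
      (Nat.lt_floor_add_one x).le⟩
  · refine ⟨d - 1, by omega, h, ?_⟩
    rwa [Nat.cast_sub (by omega), Nat.cast_one, sub_add_cancel]

theorem P2_pair_mem_Dd_general {V : Type*} [Fintype V] (G : SimpleGraph V) (d : ℕ)
    (hreg : G.IsRegularOfDegree d)
    (R B : Finset V) (hcov : ∀ v, v ∈ R ∨ v ∈ B) (hdisj : Disjoint R B)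
    (hbal : R.card = B.card) :
    (P2 G d R, P2 G d B) ∈
      convexHull ℝ {p : ℝ × ℝ | ∃ l : ℕ, l ≤ d ∧
        (p = ((l : ℝ) / d, ((l : ℝ) / d) ^ 2) ∨ p = (((l : ℝ) / d) ^ 2, (l : ℝ) / d))} := by
  change _ ∈ regionD d
  rcases eq_or_ne d 0 with rfl | hd
  · simpa [P2] using regionD.parabola_mem (le_refl 0)
  obtain ⟨x, hRx⟩ : ∃ x, (∑ v ∈ R, (degIn G R v : ℝ)) / #R = x := ⟨_, rfl⟩
  have hBx : (∑ v ∈ B, (degIn G B v : ℝ)) / #B = x := by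
    rw [← hRx, ← hbal]
    exact_mod_cast congrArg (fun n : ℕ => (n : ℝ) / #R)
      (sum_degIn_eq_of_card_eq hreg hcov hdisj hbal).symm
  obtain ⟨l, hld, hlx, hxl⟩ :=
    exists_nat_le_le_add_one hd (hRx ▸ by positivity) (hRx ▸ mean_degIn_le hreg R)
  have hIcc : ∀ X : Finset V, (∑ v ∈ X, (degIn G X v : ℝ)) / #X = x →
      P2 G d X ∈ Set.Icc (((2 * l + 1) * x - l * (l + 1)) / d ^ 2) (x / d) := by
    rintro X rfl
    exact ⟨secant_le_P2 G d X l, P2_le hreg X⟩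
  set α := ((2 * l + 1) * x - l * (l + 1)) / d ^ 2
  have hR := hIcc R hRx
  have hB := hIcc B hBx
  have hα : 0 ≤ α := div_nonneg (by nlinarith) (by positivity)
  have hαx : α ≤ x / d := hR.1.trans hR.2
  have hx : x / d ≤ 1 := div_le_one_of_le₀ (hRx ▸ mean_degIn_le hreg R) (by positivity)
  have hsec := regionD.secant_mem hld hlx hxl
  rw [← segment_eq_Icc hαx] at hR hB
  exact regionD.convex.segment_prod_segment_subset (regionD.diag_mem hd hα (hαx.trans hx))
    (regionD.swap_mem hsec) hsec (regionD.diag_mem hd (hα.trans hαx) hx) ⟨hR, hB⟩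

/-- For any `d`-regular graph with an even number of vertices and any balanced colouring
`(R,B)`, the pair `(P₂(R), P₂(B))` lies in the region `D_d`, the convex hull of the points
`{(l/d, l²/d²) : 0 ≤ l ≤ d} ∪ {(l²/d², l/d) : 0 ≤ l ≤ d}`. -/
theorem P2_pair_mem_Dd {V : Type*} [Fintype V] (G : SimpleGraph V) (d : ℕ)
    (hreg : G.IsRegularOfDegree d) (heven : Even (Fintype.card V))
    (R B : Finset V) (hcov : ∀ v, v ∈ R ∨ v ∈ B) (hdisj : Disjoint R B)
    (hbal : R.card = B.card) :
    (P2 G d R, P2 G d B) ∈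
      convexHull ℝ {p : ℝ × ℝ | ∃ l : ℕ, l ≤ d ∧
        (p = ((l : ℝ) / d, ((l : ℝ) / d) ^ 2) ∨ p = (((l : ℝ) / d) ^ 2, (l : ℝ) / d))} :=
  P2_pair_mem_Dd_general G d hreg R B hcov hdisj hbal
end

section
/- For every m ≥ 2, the set P(T^m) ⊆ ℝ² is convex. -/
open Finset
open scoped Classical

/-- Adjacency in the discrete torus `[k]^m = (ℤ/kℤ)^m`: two vertices are adjacent iff they
differ by `±1 (mod k)` in exactly one coordinate. -/
def torusAdj (m k : ℕ) (x y : Fin m → ZMod k) : Prop :=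
  x ≠ y ∧ ∃ j, (y j = x j + 1 ∨ y j = x j - 1) ∧ ∀ i, i ≠ j → y i = x i

/-- The number of neighbours of `v` lying in `R` in the torus `[k]^m`. -/
noncomputable def torusDegIn (m k : ℕ) (R : Finset (Fin m → ZMod k))
    (v : Fin m → ZMod k) : ℕ :=
  (R.filter (fun w => torusAdj m k v w)).card

/-- `P₂(R)` for the `2m`-regular torus `[k]^m`: the probability that a random walk
started at a uniform vertex of `R` stays in `R` for two steps. -/
noncomputable def torusP2 (m k : ℕ) (R : Finset (Fin m → ZMod k)) : ℝ :=
  (∑ v ∈ R, (torusDegIn m k R v : ℝ) ^ 2) / (R.card * (2 * m) ^ 2)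

/-- The set `𝒫(𝒯^m) ⊆ ℝ²`: `(x,y)` belongs to it iff for every `ε > 0` there are a `k`
(with `k^m` even) and a balanced colouring `(R,B)` of the torus `[k]^m` with
`|P₂(R) − x| < ε` and `|P₂(B) − y| < ε`. -/
def torusP (m : ℕ) : Set (ℝ × ℝ) :=
  { p | ∀ ε > (0 : ℝ), ∃ k : ℕ, 0 < k ∧ Even (k ^ m) ∧
      ∃ R B : Finset (Fin m → ZMod k),
        (∀ v, v ∈ R ∨ v ∈ B) ∧ Disjoint R B ∧ R.card = B.card ∧
        |torusP2 m k R - p.1| < ε ∧ |torusP2 m k B - p.2| < ε }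

/-!
Given balanced colourings `(R₁, B₁)` of `[k₁]^m` and `(R₂, B₂)` of `[k₂]^m` and a weight `t`, colour
`[k]^m`, `k = k₁ k₂ N`, by repeating the first colouring periodically on the slab `x₀ < a` and the
second on its complement, with `a / k ≈ t`. Reduction `ZMod k → ZMod kᵢ` is a ring map, so away from
the four hyperplanes `x₀ ∈ {a - 1, -1, a, 0}` every vertex has exactly the neighbourhood of its
image; those hyperplanes carry a `4 / k` fraction of the vertices, so `P₂` of the new colouring is
`t P₂(R₁) + (1 - t) P₂(R₂) + O(1/k)`, and likewise for the blue classes.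

For `k = 2` the steps `±e_j` coincide and the lift sees every neighbour twice; degrees are
therefore counted with multiplicity (`multiDeg`), and a colouring of `[2]^m` is first diluted to a
quarter by the parity colouring, which has `P₂ = 0`.
-/

namespace Torus

section Balanced

variable {α : Type*} [Fintype α]

def IsBalanced (R B : Finset α) : Prop :=
  (∀ v, v ∈ R ∨ v ∈ B) ∧ Disjoint R B ∧ #R = #B

theorem IsBalanced.two_mul_card {R B : Finset α} (h : IsBalanced R B) :
    2 * #R = Fintype.card α := by
  obtain ⟨hcover, hdisj, hcard⟩ := h
  have hunion : R ∪ B = univ := eq_univ_iff_forall.mpr fun v => mem_union.mpr (hcover v)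
  rw [← card_univ, ← hunion, card_union_of_disjoint hdisj, hcard, two_mul]

end Balanced

theorem abs_sum_sub_sum_le {ι : Type*} (s t : Finset ι) {f g : ι → ℝ} {C : ℝ}
    (hfg : ∀ i ∈ s, i ∉ t → f i = g i) (hC : ∀ i ∈ s, |f i - g i| ≤ C) (hC₀ : 0 ≤ C) :
    |∑ i ∈ s, f i - ∑ i ∈ s, g i| ≤ #t * C := by
  rw [← sum_sub_distrib, ← sum_filter_add_sum_filter_not s (· ∈ t),
    sum_eq_zero (s := {i ∈ s | i ∉ t}) fun i hi => by
      rw [mem_filter] at hi; rw [hfg i hi.1 hi.2, sub_self], add_zero]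
  calc |∑ i ∈ s with i ∈ t, (f i - g i)| ≤ ∑ i ∈ s with i ∈ t, |f i - g i| :=
        abs_sum_le_sum_abs _ _
    _ ≤ #{i ∈ s | i ∈ t} * C := by
        simpa using sum_le_card_nsmul _ _ C fun i hi => hC i (mem_filter.mp hi).1
    _ ≤ #t * C := by
        gcongr
        exact fun i hi => (mem_filter.mp hi).2

variable {m k : ℕ}

def step (j : Fin m) (u : ℤˣ) : Fin m → ZMod k := Pi.single j ((u : ℤ) : ZMod k)

/-- Degree in the Cayley multigraph of `(ZMod k)^m` with its `2m` generators `±e_j`. It is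
`torusDegIn` when `3 ≤ k` and twice it when `k = 2` (where `e_j = -e_j`); unlike `torusDegIn`, it
is preserved when a colouring is pulled back along a reduction `ZMod k → ZMod k₁`. -/
noncomputable def multiDeg (R : Finset (Fin m → ZMod k)) (v : Fin m → ZMod k) : ℕ :=
  #{p : Fin m × ℤˣ | v + step p.1 p.2 ∈ R}

noncomputable def multiP2 (m k : ℕ) (R : Finset (Fin m → ZMod k)) : ℝ :=
  (∑ v ∈ R, (multiDeg R v : ℝ) ^ 2) / (#R * (2 * m) ^ 2)

theorem IsBalanced.two_mul_card_eq_pow [NeZero k] {R B : Finset (Fin m → ZMod k)}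
    (h : IsBalanced R B) : 2 * #R = k ^ m ∧ 2 * #B = k ^ m := by
  have hR : 2 * #R = k ^ m := by simpa using h.two_mul_card
  exact ⟨hR, h.2.2 ▸ hR⟩

theorem cast_card_eq_pow_div_two {R : Finset (Fin m → ZMod k)} (h : 2 * #R = k ^ m) :
    (#R : ℝ) = k ^ m / 2 := by
  rw [eq_div_iff two_ne_zero, mul_comm]
  exact_mod_cast h

theorem multiDeg_le (R : Finset (Fin m → ZMod k)) (v : Fin m → ZMod k) :
    multiDeg R v ≤ 2 * m := by
  refine (card_filter_le _ _).trans_eq ?_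
  simp [Fintype.card_units_int, mul_comm]

theorem multiDeg_congr {k₁ : ℕ} {R : Finset (Fin m → ZMod k)} {R₁ : Finset (Fin m → ZMod k₁)}
    {v : Fin m → ZMod k} {v₁ : Fin m → ZMod k₁}
    (h : ∀ j u, v + step j u ∈ R ↔ v₁ + step j u ∈ R₁) : multiDeg R v = multiDeg R₁ v₁ := by
  unfold multiDeg
  congr 1
  exact filter_congr fun p _ => h p.1 p.2

theorem multiP2_nonneg (R : Finset (Fin m → ZMod k)) : 0 ≤ multiP2 m k R := by
  unfold multiP2; positivity

theorem multiP2_le_one (R : Finset (Fin m → ZMod k)) : multiP2 m k R ≤ 1 := by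
  refine div_le_one_of_le₀ ?_ (by positivity)
  calc ∑ v ∈ R, (multiDeg R v : ℝ) ^ 2 ≤ ∑ _v ∈ R, (2 * (m : ℝ)) ^ 2 := by
        gcongr with v
        exact_mod_cast multiDeg_le R v
    _ = #R * (2 * m) ^ 2 := by rw [sum_const, nsmul_eq_mul]

theorem sum_add_step (v : Fin m → ZMod k) (j : Fin m) (u : ℤˣ) :
    ∑ i, (v + step j u : Fin m → ZMod k) i = ∑ i, v i + ((u : ℤ) : ZMod k) := by
  simp [step, sum_add_distrib]

theorem add_step_apply_zero [NeZero m] (v : Fin m → ZMod k) (j : Fin m) (u : ℤˣ) :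
    (v + step j u : Fin m → ZMod k) 0 = v 0 ∨
      (v + step j u : Fin m → ZMod k) 0 = v 0 + ((u : ℤ) : ZMod k) := by
  by_cases hj : j = 0
  · subst hj; simp [step]
  · simp [step, Ne.symm hj]

theorem intCast_unit_ne_zero (hk : 2 ≤ k) (u : ℤˣ) : ((u : ℤ) : ZMod k) ≠ 0 := by
  have : Nontrivial (ZMod k) := ZMod.nontrivial_iff.mpr (by omega)
  rcases Int.units_eq_one_or u with rfl | rfl <;> simp

theorem eq_of_step_eq (hk : 2 ≤ k) {j j' : Fin m} {u u' : ℤˣ}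
    (h : (step j u : Fin m → ZMod k) = step j' u') : j = j' := by
  by_contra hjj
  have := congrFun h j
  simp [step, hjj, intCast_unit_ne_zero hk] at this

theorem torusAdj_iff (hk : 2 ≤ k) {v w : Fin m → ZMod k} :
    torusAdj m k v w ↔ ∃ j u, w = v + step j u := by
  constructor
  · rintro ⟨-, j, hj, hoff⟩
    have hu : ∃ u : ℤˣ, w j = v j + ((u : ℤ) : ZMod k) := by
      rcases hj with h | h
      · exact ⟨1, by simpa using h⟩
      · exact ⟨-1, by simpa [sub_eq_add_neg] using h⟩
    obtain ⟨u, hu⟩ := hu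
    refine ⟨j, u, funext fun i => ?_⟩
    by_cases hij : i = j
    · subst hij; simpa [step] using hu
    · simpa [step, hij] using hoff i hij
  · rintro ⟨j, u, rfl⟩
    refine ⟨fun h => ?_, j, ?_, fun i hij => by simp [step, hij]⟩
    · have := congrFun h j
      simp [step, intCast_unit_ne_zero hk] at this
    · rcases Int.units_eq_one_or u with rfl | rfl
      · left; simp [step]
      · right; simp [step, sub_eq_add_neg]

theorem filter_torusAdj_eq_image (hk : 2 ≤ k) (R : Finset (Fin m → ZMod k))
    (v : Fin m → ZMod k) :
    {w ∈ R | torusAdj m k v w} =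
      Finset.image (fun p : Fin m × ℤˣ => v + step p.1 p.2) {p | v + step p.1 p.2 ∈ R} := by
  ext w
  simp only [mem_filter, mem_image, mem_univ, true_and, torusAdj_iff hk, Prod.exists]
  constructor
  · rintro ⟨hw, j, u, rfl⟩
    exact ⟨j, u, hw, rfl⟩
  · rintro ⟨j, u, hw, rfl⟩
    exact ⟨hw, j, u, rfl⟩

theorem torusDegIn_eq_multiDeg (hk : 3 ≤ k) (R : Finset (Fin m → ZMod k))
    (v : Fin m → ZMod k) : torusDegIn m k R v = multiDeg R v := by
  rw [torusDegIn, filter_torusAdj_eq_image (by omega), card_image_of_injective, multiDeg]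
  rintro ⟨j, u⟩ ⟨j', u'⟩ h
  have hstep : (step j u : Fin m → ZMod k) = step j' u' := add_left_cancel h
  obtain rfl := eq_of_step_eq (by omega) hstep
  have : Fact (2 < k) := ⟨by omega⟩
  have hu : ((u : ℤ) : ZMod k) = u' := by simpa [step] using congrFun hstep j
  rcases Int.units_eq_one_or u with rfl | rfl <;> rcases Int.units_eq_one_or u' with rfl | rfl <;>
    simp_all [ZMod.neg_one_ne_one, ZMod.neg_one_ne_one.symm]

theorem multiDeg_eq_two_mul_torusDegIn (R : Finset (Fin m → ZMod 2)) (v : Fin m → ZMod 2) :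
    multiDeg R v = 2 * torusDegIn m 2 R v := by
  have hstep : ∀ j (u : ℤˣ), (step j u : Fin m → ZMod 2) = Pi.single j 1 := by
    intro j u
    rcases Int.units_eq_one_or u with rfl | rfl <;> simp [step]
  set S : Finset (Fin m) := {j | v + Pi.single j 1 ∈ R}
  have hmulti : multiDeg R v = #(S ×ˢ (univ : Finset ℤˣ)) := by
    unfold multiDeg; congr 1; ext p; simp [S, hstep, Int.units_eq_one_or]
  have htorus : torusDegIn m 2 R v = #(S.image fun j => v + Pi.single j 1) := by
    rw [torusDegIn, filter_torusAdj_eq_image le_rfl]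
    congr 1; ext w; simp [S, hstep]
  have hinj : Function.Injective fun j : Fin m => v + Pi.single j (1 : ZMod 2) := by
    intro j j' h
    exact eq_of_step_eq (k := 2) le_rfl (u := 1) (u' := 1) (by simpa [hstep] using h)
  rw [hmulti, htorus, card_product, card_image_of_injective _ hinj, card_univ,
    Fintype.card_units_int, mul_comm]

theorem torusP2_eq_multiP2 (hk : 3 ≤ k) (R : Finset (Fin m → ZMod k)) :
    torusP2 m k R = multiP2 m k R := by
  simp only [torusP2, multiP2, torusDegIn_eq_multiDeg hk]

theorem multiP2_eq_four_mul_torusP2 (R : Finset (Fin m → ZMod 2)) :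
    multiP2 m 2 R = 4 * torusP2 m 2 R := by
  simp only [torusP2, multiP2, multiDeg_eq_two_mul_torusDegIn, Nat.cast_mul, mul_pow, ← mul_sum]
  ring

def parity (m : ℕ) (c : ZMod 2) : Finset (Fin m → ZMod 2) := {v | ∑ i, v i = c}

theorem isBalanced_parity [NeZero m] : IsBalanced (parity m 0) (parity m 1) := by
  have hflip (v : Fin m → ZMod 2) : ∑ i, (v + step 0 1 : Fin m → ZMod 2) i = ∑ i, v i + 1 := by
    simpa using sum_add_step v 0 1
  have hinv (v : Fin m → ZMod 2) : v + step 0 1 + step 0 1 = v := by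
    ext i
    by_cases hi : i = 0 <;> simp [step, hi, add_assoc]
    decide
  refine ⟨fun v => ?_, disjoint_filter.mpr fun v _ h0 h1 => by simp_all, ?_⟩
  · have : ∀ z : ZMod 2, z = 0 ∨ z = 1 := by decide
    simpa [parity] using this (∑ i, v i)
  · refine card_nbij' (· + step 0 1) (· + step 0 1) (fun v hv => ?_) (fun v hv => ?_)
      (fun v _ => hinv v) (fun v _ => hinv v)
    · simp_all [parity]
    · simp_all [parity]; decide

theorem multiP2_parity (c : ZMod 2) : multiP2 m 2 (parity m c) = 0 := by
  have hdeg : ∀ v ∈ parity m c, multiDeg (parity m c) v = 0 := by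
    intro v hv
    refine card_eq_zero.mpr (filter_eq_empty_iff.mpr fun p _ hp => ?_)
    simp only [parity, mem_filter, mem_univ, true_and, sum_add_step] at hv hp
    rcases Int.units_eq_one_or p.2 with h | h <;> simp [h, hv] at hp
  rw [multiP2, sum_congr rfl fun v hv => by rw [hdeg v hv]]
  simp

section Reduction

variable {k₁ : ℕ}

def reduce (h : k₁ ∣ k) : (Fin m → ZMod k) →+* (Fin m → ZMod k₁) :=
  (ZMod.castHom h (ZMod k₁)).compLeft (Fin m)

theorem reduce_apply (h : k₁ ∣ k) (x : Fin m → ZMod k) (i : Fin m) :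
    reduce h x i = ZMod.castHom h (ZMod k₁) (x i) := rfl

theorem reduce_add_step (h : k₁ ∣ k) (v : Fin m → ZMod k) (j : Fin m) (u : ℤˣ) :
    reduce h (v + step j u) = reduce h v + step j u := by
  rw [map_add]
  congr 1
  ext i
  by_cases hij : i = j
  · subst hij; simp [reduce_apply, step]
  · simp [reduce_apply, step, hij]

theorem card_val_lt_castHom_eq [NeZero k] [NeZero k₁] (h : k₁ ∣ k) {a : ℕ} (ha : k₁ ∣ a)
    (hak : a ≤ k) (b : ZMod k₁) :
    #{c : ZMod k | c.val < a ∧ ZMod.castHom h (ZMod k₁) c = b} = a / k₁ := by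
  have hb : ∀ n : ℕ, (n : ZMod k₁) = b ↔ n ≡ b.val [MOD k₁] := fun n => by
    rw [← ZMod.natCast_eq_natCast_iff, ZMod.natCast_zmod_val]
  have hval : ∀ n < a, (n : ZMod k).val = n := fun n hn => by
    rw [ZMod.val_natCast, Nat.mod_eq_of_lt (by omega)]
  simp_rw [ZMod.castHom_apply, ZMod.cast_eq_val]
  calc #{c : ZMod k | c.val < a ∧ (c.val : ZMod k₁) = b}
      = #{n ∈ range a | n ≡ b.val [MOD k₁]} := by
        refine card_nbij' ZMod.val (↑) (fun c hc => ?_) (fun n hn => ?_)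
          (fun c _ => ZMod.natCast_zmod_val c) (fun n hn => hval n ?_)
        · simp only [coe_filter, mem_univ, true_and, Set.mem_ofPred_eq, mem_range] at hc ⊢
          exact ⟨hc.1, (hb _).1 hc.2⟩
        · simp only [coe_filter, mem_univ, true_and, Set.mem_ofPred_eq, mem_range] at hn ⊢
          rw [hval n hn.1]
          exact ⟨hn.1, (hb n).2 hn.2⟩
        · simp only [coe_filter, mem_range, Set.mem_ofPred_eq] at hn
          exact hn.1
    _ = a / k₁ := by
        rw [← Nat.count_eq_card_filter_range, Nat.count_modEq_card _ (NeZero.pos k₁),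
          Nat.mod_eq_zero_of_dvd ha]
        simp

theorem card_filter_val_lt_reduce_eq [NeZero m] [NeZero k] [NeZero k₁] (h : k₁ ∣ k) {a : ℕ}
    (ha : k₁ ∣ a) (hak : a ≤ k) (u : Fin m → ZMod k₁) :
    #{x : Fin m → ZMod k | (x 0).val < a ∧ reduce h x = u} = a / k₁ * (k / k₁) ^ (m - 1) := by
  set bound : Fin m → ℕ := Function.update (fun _ => k) 0 a
  have hbound : ∀ i, k₁ ∣ bound i ∧ bound i ≤ k := fun i => by
    by_cases hi : i = 0 <;> simp [bound, hi, ha, hak, h]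
  have hset : ({x : Fin m → ZMod k | (x 0).val < a ∧ reduce h x = u} : Finset _) =
      Fintype.piFinset fun i =>
        {c : ZMod k | c.val < bound i ∧ ZMod.castHom h (ZMod k₁) c = u i} := by
    ext x
    simp only [mem_filter, mem_univ, true_and, Fintype.mem_piFinset, funext_iff, reduce_apply]
    constructor
    · rintro ⟨h0, hu⟩ i
      by_cases hi : i = 0
      · subst hi; exact ⟨by simpa [bound] using h0, hu _⟩
      · exact ⟨by simpa [bound, hi] using (x i).val_lt, hu i⟩
    · intro hx
      exact ⟨by simpa [bound] using (hx 0).1, fun i => (hx i).2⟩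
  rw [hset, Fintype.card_piFinset, ← mul_prod_erase univ _ (mem_univ 0),
    prod_congr rfl fun i hi => by
      rw [card_val_lt_castHom_eq h (hbound i).1 (hbound i).2,
        show bound i = k by simp [bound, (mem_erase.mp hi).1]],
    prod_const, card_erase_of_mem (mem_univ 0), card_univ, Fintype.card_fin,
    card_val_lt_castHom_eq h (hbound 0).1 (hbound 0).2]
  simp [bound]

theorem sum_val_lt_reduce [NeZero m] [NeZero k] [NeZero k₁] (h : k₁ ∣ k) {a : ℕ} (ha : k₁ ∣ a)
    (hak : a ≤ k) (g : (Fin m → ZMod k₁) → ℝ) :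
    ∑ x with (x 0).val < a, g (reduce h x) = a / k * (k / k₁) ^ m * ∑ u, g u := by
  rw [← sum_fiberwise' _ (reduce h) g, mul_sum]
  refine sum_congr rfl fun u _ => ?_
  rw [sum_const, filter_filter, card_filter_val_lt_reduce_eq h ha hak u, nsmul_eq_mul]
  obtain ⟨a, rfl⟩ := ha
  obtain ⟨q, rfl⟩ := h
  have hk₁ : (k₁ : ℝ) ≠ 0 := NeZero.ne _
  have hq : (q : ℝ) ≠ 0 := by have := NeZero.ne (k₁ * q); simp_all
  obtain ⟨n, rfl⟩ : ∃ n, m = n + 1 := ⟨m - 1, by have := NeZero.pos m; omega⟩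
  simp only [Nat.add_sub_cancel, Nat.mul_div_cancel_left _ (NeZero.pos k₁)]
  push_cast
  field_simp
  ring

end Reduction

section Boundary

theorem add_one_eq_of_not_val_add_one_lt_iff [NeZero k] {c : ZMod k} {a : ℕ}
    (h : ¬((c + 1).val < a ↔ c.val < a)) : c + 1 = a ∨ c + 1 = 0 := by
  by_contra! hne
  have hc : c + 1 = ((c.val + 1 : ℕ) : ZMod k) := by push_cast; rw [ZMod.natCast_zmod_val]
  have hlt : c.val + 1 < k := by
    by_contra hge
    have hk : c.val + 1 = k := by have := c.val_lt; omega
    exact hne.2 (by rw [hc, hk, ZMod.natCast_self])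
  rw [hc, ZMod.val_natCast, Nat.mod_eq_of_lt hlt] at h
  exact hne.1 (by rw [hc, show c.val + 1 = a by omega])

def slabBoundary (k a : ℕ) : Finset (ZMod k) := {(a : ZMod k) - 1, -1, (a : ZMod k), 0}

theorem val_add_unit_lt_iff [NeZero k] {a : ℕ} {c : ZMod k} (hc : c ∉ slabBoundary k a)
    (u : ℤˣ) : (c + u).val < a ↔ c.val < a := by
  simp only [slabBoundary, mem_insert, mem_singleton, not_or] at hc
  rcases Int.units_eq_one_or u with rfl | rfl
  · by_contra h
    rcases add_one_eq_of_not_val_add_one_lt_iff (by simpa using h) with h' | h'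
    · exact hc.1 (eq_sub_of_add_eq h')
    · exact hc.2.1 (eq_neg_of_add_eq_zero_left h')
  · by_contra h
    have h' : ¬((c - 1 + 1).val < a ↔ (c - 1).val < a) := by
      simpa [sub_eq_add_neg, Iff.comm] using h
    rcases add_one_eq_of_not_val_add_one_lt_iff h' with h'' | h'' <;> simp_all

theorem card_filter_apply_mem [NeZero k] (i : Fin m) (S : Finset (ZMod k)) :
    #{x : Fin m → ZMod k | x i ∈ S} = #S * k ^ (m - 1) := by
  have hset : ({x : Fin m → ZMod k | x i ∈ S} : Finset _) =
      Fintype.piFinset (Function.update (fun _ => univ) i S) := by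
    ext x
    simp only [mem_filter, mem_univ, true_and, Fintype.mem_piFinset]
    refine ⟨fun hx j => ?_, fun hx => by simpa using hx i⟩
    by_cases hj : j = i
    · subst hj; simpa using hx
    · simp [hj]
  rw [hset, Fintype.card_piFinset, ← mul_prod_erase univ _ (mem_univ i),
    prod_congr rfl fun j hj => by rw [Function.update_of_ne (mem_erase.mp hj).1]]
  simp [ZMod.card]

end Boundary

section Mix

variable [NeZero m] [NeZero k] {k₁ k₂ : ℕ} (h₁ : k₁ ∣ k) (h₂ : k₂ ∣ k) {a : ℕ}

variable (a) in
def mix (R₁ : Finset (Fin m → ZMod k₁)) (R₂ : Finset (Fin m → ZMod k₂)) :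
    Finset (Fin m → ZMod k) :=
  {x | if (x 0).val < a then reduce h₁ x ∈ R₁ else reduce h₂ x ∈ R₂}

variable {R₁ B₁ : Finset (Fin m → ZMod k₁)} {R₂ B₂ : Finset (Fin m → ZMod k₂)}

theorem mem_mix {x : Fin m → ZMod k} :
    x ∈ mix h₁ h₂ a R₁ R₂ ↔ if (x 0).val < a then reduce h₁ x ∈ R₁ else reduce h₂ x ∈ R₂ := by
  simp [mix]

theorem multiDeg_mix_of_notMem {x : Fin m → ZMod k} (hx : x 0 ∉ slabBoundary k a) :
    multiDeg (mix h₁ h₂ a R₁ R₂) x =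
      if (x 0).val < a then multiDeg R₁ (reduce h₁ x) else multiDeg R₂ (reduce h₂ x) := by
  have hside (j : Fin m) (u : ℤˣ) :
      ((x + step j u : Fin m → ZMod k) 0).val < a ↔ (x 0).val < a := by
    rcases add_step_apply_zero x j u with h | h <;> rw [h]
    exact val_add_unit_lt_iff hx u
  split_ifs with hlt
  · refine multiDeg_congr fun j u => ?_
    rw [mem_mix, if_pos ((hside j u).2 hlt), reduce_add_step]
  · refine multiDeg_congr fun j u => ?_
    rw [mem_mix, if_neg (mt (hside j u).1 hlt), reduce_add_step]

theorem abs_sum_sq_multiDeg_mix_sub_le :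
    |∑ x ∈ mix h₁ h₂ a R₁ R₂, (multiDeg (mix h₁ h₂ a R₁ R₂) x : ℝ) ^ 2 -
        ∑ x ∈ mix h₁ h₂ a R₁ R₂, (↑(if (x 0).val < a then multiDeg R₁ (reduce h₁ x)
          else multiDeg R₂ (reduce h₂ x)) : ℝ) ^ 2| ≤ 4 * k ^ (m - 1) * (2 * m) ^ 2 := by
  have hsq {n : ℕ} (d : ℕ) (hd : d ≤ 2 * n) : (0 : ℝ) ≤ (d : ℝ) ^ 2 ∧ (d : ℝ) ^ 2 ≤ (2 * n) ^ 2 :=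
    ⟨by positivity, pow_le_pow_left₀ (by positivity) (by exact_mod_cast hd) 2⟩
  calc _ ≤ #({x | x 0 ∈ slabBoundary k a} : Finset (Fin m → ZMod k)) * (2 * (m : ℝ)) ^ 2 := by
        refine abs_sum_sub_sum_le _ _ (fun x _ hx => ?_) (fun x _ => ?_) (by positivity)
        · rw [multiDeg_mix_of_notMem h₁ h₂ (by simpa using hx)]
        · have hmix := hsq _ (multiDeg_le (mix h₁ h₂ a R₁ R₂) x)
          have hmodel := hsq (n := m) (if (x 0).val < a then multiDeg R₁ (reduce h₁ x)
            else multiDeg R₂ (reduce h₂ x)) (by split_ifs <;> exact multiDeg_le _ _)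
          rw [abs_sub_le_iff]
          constructor <;> linarith
    _ ≤ 4 * k ^ (m - 1) * (2 * m) ^ 2 := by
        rw [card_filter_apply_mem]
        gcongr
        exact_mod_cast Nat.mul_le_mul_right _ card_le_four

variable [NeZero k₁] [NeZero k₂]

theorem sum_ite_val_lt_reduce (ha₁ : k₁ ∣ a) (ha₂ : k₂ ∣ a) (hak : a ≤ k)
    (g₁ : (Fin m → ZMod k₁) → ℝ) (g₂ : (Fin m → ZMod k₂) → ℝ) :
    ∑ x : Fin m → ZMod k, (if (x 0).val < a then g₁ (reduce h₁ x) else g₂ (reduce h₂ x)) =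
      a / k * (k / k₁) ^ m * ∑ u, g₁ u + (1 - a / k) * (k / k₂) ^ m * ∑ u, g₂ u := by
  have htotal := sum_val_lt_reduce h₂ h₂ le_rfl g₂
  rw [filter_true_of_mem fun x _ => (x 0).val_lt, div_self (Nat.cast_ne_zero.mpr (NeZero.ne k)),
    one_mul] at htotal
  rw [sum_ite, sum_val_lt_reduce h₁ ha₁ hak,
    ← add_sub_cancel_left (∑ x with (x 0).val < a, g₂ (reduce h₂ x))
      (∑ x with ¬(x 0).val < a, g₂ (reduce h₂ x)),
    sum_filter_add_sum_filter_not, htotal, sum_val_lt_reduce h₂ ha₂ hak]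
  ring

theorem sum_mix (ha₁ : k₁ ∣ a) (ha₂ : k₂ ∣ a) (hak : a ≤ k) (f₁ : (Fin m → ZMod k₁) → ℝ)
    (f₂ : (Fin m → ZMod k₂) → ℝ) :
    ∑ x ∈ mix h₁ h₂ a R₁ R₂, (if (x 0).val < a then f₁ (reduce h₁ x) else f₂ (reduce h₂ x)) =
      a / k * (k / k₁) ^ m * ∑ u ∈ R₁, f₁ u + (1 - a / k) * (k / k₂) ^ m * ∑ u ∈ R₂, f₂ u := by
  have hsum {n : ℕ} [NeZero n] (R : Finset (Fin m → ZMod n)) (f : (Fin m → ZMod n) → ℝ) :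
      ∑ u ∈ R, f u = ∑ u, if u ∈ R then f u else 0 := by
    rw [sum_ite_mem, univ_inter]
  rw [mix, sum_filter, hsum R₁, hsum R₂, ← sum_ite_val_lt_reduce h₁ h₂ ha₁ ha₂ hak]
  refine sum_congr rfl fun x _ => ?_
  split_ifs <;> rfl

theorem card_mix (ha₁ : k₁ ∣ a) (ha₂ : k₂ ∣ a) (hak : a ≤ k) (hR₁ : 2 * #R₁ = k₁ ^ m)
    (hR₂ : 2 * #R₂ = k₂ ^ m) : (#(mix h₁ h₂ a R₁ R₂) : ℝ) = k ^ m / 2 := by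
  have hsum := sum_mix h₁ h₂ (R₁ := R₁) (R₂ := R₂) ha₁ ha₂ hak (fun _ => 1) (fun _ => 1)
  simp only [ite_self, sum_const, nsmul_eq_mul, mul_one] at hsum
  have hk₁ : (k₁ : ℝ) ≠ 0 := NeZero.ne _
  have hk₂ : (k₂ : ℝ) ≠ 0 := NeZero.ne _
  rw [hsum, cast_card_eq_pow_div_two hR₁, cast_card_eq_pow_div_two hR₂, div_pow, div_pow]
  field_simp
  ring

theorem isBalanced_mix (ha₁ : k₁ ∣ a) (ha₂ : k₂ ∣ a) (hak : a ≤ k) (hRB₁ : IsBalanced R₁ B₁)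
    (hRB₂ : IsBalanced R₂ B₂) : IsBalanced (mix h₁ h₂ a R₁ R₂) (mix h₁ h₂ a B₁ B₂) := by
  obtain ⟨hR₁, hB₁⟩ := hRB₁.two_mul_card_eq_pow
  obtain ⟨hR₂, hB₂⟩ := hRB₂.two_mul_card_eq_pow
  refine ⟨fun x => ?_, disjoint_left.mpr fun x hR hB => ?_, ?_⟩
  · simp only [mem_mix]
    split_ifs
    exacts [hRB₁.1 _, hRB₂.1 _]
  · rw [mem_mix] at hR hB
    split_ifs at hR hB
    exacts [disjoint_left.mp hRB₁.2.1 hR hB, disjoint_left.mp hRB₂.2.1 hR hB]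
  · exact_mod_cast (card_mix h₁ h₂ ha₁ ha₂ hak hR₁ hR₂).trans
      (card_mix h₁ h₂ ha₁ ha₂ hak hB₁ hB₂).symm

theorem abs_multiP2_mix_sub_le (ha₁ : k₁ ∣ a) (ha₂ : k₂ ∣ a) (hak : a ≤ k)
    (hR₁ : 2 * #R₁ = k₁ ^ m) (hR₂ : 2 * #R₂ = k₂ ^ m) :
    |multiP2 m k (mix h₁ h₂ a R₁ R₂) -
        (a / k * multiP2 m k₁ R₁ + (1 - a / k) * multiP2 m k₂ R₂)| ≤ 8 / k := by
  have hk : (0 : ℝ) < k := by exact_mod_cast NeZero.pos k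
  have hm : (0 : ℝ) < m := by exact_mod_cast NeZero.pos m
  have hk₁ : (k₁ : ℝ) ≠ 0 := NeZero.ne _
  have hk₂ : (k₂ : ℝ) ≠ 0 := NeZero.ne _
  have hD : (0 : ℝ) < k ^ m / 2 * (2 * m) ^ 2 := by positivity
  have hmodel : a / k * multiP2 m k₁ R₁ + (1 - a / k) * multiP2 m k₂ R₂ =
      (∑ x ∈ mix h₁ h₂ a R₁ R₂, (↑(if (x 0).val < a then multiDeg R₁ (reduce h₁ x)
          else multiDeg R₂ (reduce h₂ x)) : ℝ) ^ 2) / (k ^ m / 2 * (2 * m) ^ 2) := by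
    simp only [Nat.cast_ite, ite_pow]
    rw [sum_mix h₁ h₂ ha₁ ha₂ hak (fun u => (multiDeg R₁ u : ℝ) ^ 2)
      (fun u => (multiDeg R₂ u : ℝ) ^ 2), multiP2, multiP2, cast_card_eq_pow_div_two hR₁,
      cast_card_eq_pow_div_two hR₂, div_pow, div_pow]
    field_simp
  rw [multiP2, card_mix h₁ h₂ ha₁ ha₂ hak hR₁ hR₂, hmodel, ← sub_div, abs_div, abs_of_pos hD,
    div_le_iff₀ hD]
  calc _ ≤ 4 * (k : ℝ) ^ (m - 1) * (2 * m) ^ 2 := abs_sum_sq_multiDeg_mix_sub_le h₁ h₂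
    _ = 8 / k * (k ^ m / 2 * (2 * m) ^ 2) := by
        rw [← pow_sub_one_mul (NeZero.ne m) (k : ℝ)]
        field_simp
        ring

theorem abs_multiP2_mix_sub_convex_comb_le (ha₁ : k₁ ∣ a) (ha₂ : k₂ ∣ a) (hak : a ≤ k)
    (hR₁ : 2 * #R₁ = k₁ ^ m) (hR₂ : 2 * #R₂ = k₂ ^ m) (t : ℝ) :
    |multiP2 m k (mix h₁ h₂ a R₁ R₂) - (t * multiP2 m k₁ R₁ + (1 - t) * multiP2 m k₂ R₂)| ≤
      8 / k + |a / k - t| := by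
  have hx₁ := multiP2_nonneg R₁
  have hx₂ := multiP2_nonneg R₂
  have hx₁' := multiP2_le_one R₁
  have hx₂' := multiP2_le_one R₂
  have hmodel : |(a / k * multiP2 m k₁ R₁ + (1 - a / k) * multiP2 m k₂ R₂) -
      (t * multiP2 m k₁ R₁ + (1 - t) * multiP2 m k₂ R₂)| ≤ |a / k - t| := by
    rw [show ∀ s x y : ℝ, (s * x + (1 - s) * y) - (t * x + (1 - t) * y) = (s - t) * (x - y) by
      intros; ring, abs_mul]
    exact mul_le_of_le_one_right (abs_nonneg _) (abs_sub_le_iff.mpr ⟨by linarith, by linarith⟩)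
  exact (abs_sub_le _ _ _).trans
    (add_le_add (abs_multiP2_mix_sub_le h₁ h₂ ha₁ ha₂ hak hR₁ hR₂) hmodel)

end Mix

theorem exists_even_approx {t δ : ℝ} (ht₀ : 0 ≤ t) (ht₁ : t ≤ 1) (hδ : 0 < δ) :
    ∃ N A : ℕ, 3 ≤ N ∧ Even N ∧ A ≤ N ∧ 8 / N + |(A : ℝ) / N - t| < δ := by
  set N := 2 * (⌈9 / δ⌉₊ + 2)
  have hN : (0 : ℝ) < N := by positivity
  have hδN : 9 / δ < N := by
    have := Nat.le_ceil (9 / δ)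
    have : (⌈9 / δ⌉₊ : ℝ) < N := by exact_mod_cast (show ⌈9 / δ⌉₊ < N by omega)
    linarith
  have hA₁ : (⌊t * N⌋₊ : ℝ) ≤ t * N := Nat.floor_le (by positivity)
  have hA₂ : t * N < ⌊t * N⌋₊ + 1 := Nat.lt_floor_add_one _
  refine ⟨N, ⌊t * N⌋₊, by omega, ⟨⌈9 / δ⌉₊ + 2, by omega⟩, Nat.floor_le_of_le (by nlinarith), ?_⟩
  have happrox : |(⌊t * N⌋₊ : ℝ) / N - t| ≤ 1 / N := by
    rw [div_sub' hN.ne', abs_div, abs_of_pos hN]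
    gcongr
    rw [abs_le]
    constructor <;> linarith
  calc _ ≤ 8 / (N : ℝ) + 1 / N := by gcongr
    _ = 9 / N := by ring
    _ < δ := by rwa [div_lt_iff₀ hN, ← div_lt_iff₀' hδ]

theorem exists_isBalanced_torusP2_near [NeZero m] {k₁ k₂ : ℕ} [NeZero k₁] [NeZero k₂]
    {R₁ B₁ : Finset (Fin m → ZMod k₁)} {R₂ B₂ : Finset (Fin m → ZMod k₂)}
    (hRB₁ : IsBalanced R₁ B₁) (hRB₂ : IsBalanced R₂ B₂) {t δ : ℝ} (ht₀ : 0 ≤ t) (ht₁ : t ≤ 1)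
    (hδ : 0 < δ) :
    ∃ k, 3 ≤ k ∧ Even (k ^ m) ∧ ∃ R B : Finset (Fin m → ZMod k), IsBalanced R B ∧
      |torusP2 m k R - (t * multiP2 m k₁ R₁ + (1 - t) * multiP2 m k₂ R₂)| < δ ∧
      |torusP2 m k B - (t * multiP2 m k₁ B₁ + (1 - t) * multiP2 m k₂ B₂)| < δ := by
  obtain ⟨N, A, hN, hNeven, hAN, hδN⟩ := exists_even_approx ht₀ ht₁ hδ
  have hNk : N ≤ k₁ * k₂ * N :=
    Nat.le_mul_of_pos_left N (Nat.mul_pos (NeZero.pos k₁) (NeZero.pos k₂))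
  have hk : 3 ≤ k₁ * k₂ * N := hN.trans hNk
  have : NeZero (k₁ * k₂ * N) := ⟨by omega⟩
  have h₁ : k₁ ∣ k₁ * k₂ * N := ⟨k₂ * N, by ring⟩
  have h₂ : k₂ ∣ k₁ * k₂ * N := ⟨k₁ * N, by ring⟩
  have ha₁ : k₁ ∣ k₁ * k₂ * A := ⟨k₂ * A, by ring⟩
  have ha₂ : k₂ ∣ k₁ * k₂ * A := ⟨k₁ * A, by ring⟩
  have hak : k₁ * k₂ * A ≤ k₁ * k₂ * N := Nat.mul_le_mul_left _ hAN
  have hratio : ((k₁ * k₂ * A : ℕ) : ℝ) / (k₁ * k₂ * N : ℕ) = A / N := by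
    have : (k₁ : ℝ) * k₂ ≠ 0 := mul_ne_zero (NeZero.ne _) (NeZero.ne _)
    push_cast
    rw [mul_div_mul_left _ _ this]
  have hkN : 8 / ((k₁ * k₂ * N : ℕ) : ℝ) ≤ 8 / N := by gcongr
  have hnear {S₁ : Finset (Fin m → ZMod k₁)} {S₂ : Finset (Fin m → ZMod k₂)}
      (hS₁ : 2 * #S₁ = k₁ ^ m) (hS₂ : 2 * #S₂ = k₂ ^ m) :
      |torusP2 m _ (mix h₁ h₂ (k₁ * k₂ * A) S₁ S₂) -
        (t * multiP2 m k₁ S₁ + (1 - t) * multiP2 m k₂ S₂)| < δ := by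
    rw [torusP2_eq_multiP2 hk]
    refine (abs_multiP2_mix_sub_convex_comb_le h₁ h₂ ha₁ ha₂ hak hS₁ hS₂ t).trans_lt ?_
    rw [hratio]
    linarith
  obtain ⟨hR₁, hB₁⟩ := hRB₁.two_mul_card_eq_pow
  obtain ⟨hR₂, hB₂⟩ := hRB₂.two_mul_card_eq_pow
  exact ⟨_, hk, (hNeven.mul_left _).pow_of_ne_zero (NeZero.ne m), _, _,
    isBalanced_mix h₁ h₂ ha₁ ha₂ hak hRB₁ hRB₂, hnear hR₁ hR₂, hnear hB₁ hB₂⟩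

theorem exists_multiP2_near_of_mem_torusP [NeZero m] {p : ℝ × ℝ} (hp : p ∈ torusP m) {ε : ℝ}
    (hε : 0 < ε) : ∃ k, 0 < k ∧ ∃ R B : Finset (Fin m → ZMod k), IsBalanced R B ∧
      |multiP2 m k R - p.1| < ε ∧ |multiP2 m k B - p.2| < ε := by
  obtain ⟨k, hk, hev, R, B, hcover, hdisj, hcard, hR, hB⟩ := hp (ε / 2) (half_pos hε)
  have hRB : IsBalanced R B := ⟨hcover, hdisj, hcard⟩
  obtain ⟨r, hr⟩ := (Nat.even_pow.mp hev).1
  rcases (show k = 2 ∨ 3 ≤ k by omega) with rfl | hk₃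
  · -- a quarter of `R` against the parity colouring (where `P₂ = 0`) cancels the factor 4
    obtain ⟨k', hk', -, R', B', hRB', hR', hB'⟩ := exists_isBalanced_torusP2_near hRB
      isBalanced_parity (t := 1 / 4) (by norm_num) (by norm_num) (half_pos hε)
    simp only [multiP2_parity, mul_zero, add_zero] at hR' hB'
    rw [multiP2_eq_four_mul_torusP2] at hR' hB'
    refine ⟨k', by omega, R', B', hRB', ?_, ?_⟩ <;> rw [← torusP2_eq_multiP2 hk'] <;>
      rw [abs_lt] at * <;> constructor <;> linarith
  · refine ⟨k, hk, R, B, hRB, ?_, ?_⟩ <;> rw [← torusP2_eq_multiP2 hk₃] <;> linarith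

theorem abs_sub_convex_comb_lt {t x y x' y' z δ η : ℝ} (ht₀ : 0 ≤ t) (ht₁ : t ≤ 1)
    (hz : |z - (t * x + (1 - t) * y)| < δ) (hx : |x - x'| < η) (hy : |y - y'| < η) :
    |z - (t * x' + (1 - t) * y')| < δ + η := by
  rw [abs_lt] at *
  constructor <;> nlinarith

end Torus

theorem torusP_convex_general (m : ℕ) : Convex ℝ (torusP m) := by
  rcases Nat.eq_zero_or_pos m with rfl | hm
  · -- `k ^ 0 = 1` is never even, so `torusP 0` is empty
    intro p hp
    obtain ⟨k, -, hev, -⟩ := hp 1 one_pos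
    simp at hev
  have : NeZero m := ⟨hm.ne'⟩
  intro p hp q hq α β hα hβ hαβ ε hε
  obtain ⟨k₁, hk₁, R₁, B₁, hRB₁, hR₁, hB₁⟩ :=
    Torus.exists_multiP2_near_of_mem_torusP hp (half_pos hε)
  obtain ⟨k₂, hk₂, R₂, B₂, hRB₂, hR₂, hB₂⟩ :=
    Torus.exists_multiP2_near_of_mem_torusP hq (half_pos hε)
  have : NeZero k₁ := ⟨hk₁.ne'⟩
  have : NeZero k₂ := ⟨hk₂.ne'⟩
  obtain ⟨k, hk, hev, R, B, ⟨hcover, hdisj, hcard⟩, hR, hB⟩ :=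
    Torus.exists_isBalanced_torusP2_near hRB₁ hRB₂ hα (by linarith) (half_pos hε)
  obtain rfl : β = 1 - α := by linarith
  refine ⟨k, by omega, hev, R, B, hcover, hdisj, hcard, ?_, ?_⟩
  · simpa using (Torus.abs_sub_convex_comb_lt hα (by linarith) hR hR₁ hR₂).trans_eq (add_halves ε)
  · simpa using (Torus.abs_sub_convex_comb_lt hα (by linarith) hB hB₁ hB₂).trans_eq (add_halves ε)

/-- For every `m ≥ 2`, the set `𝒫(𝒯^m)` is convex. -/
theorem torusP_convex (m : ℕ) (hm : 2 ≤ m) : Convex ℝ (torusP m) :=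
  torusP_convex_general m
end

section
/- Let m ≥ 2 and 0 ≤ r ≤ 2m. If an independent exact r-cover of the grid graph ℤ^m exists, then the point (((2m−r)/(2m))², (2m−r)/(2m)) belongs to P(T^m). -/
open Finset
open scoped Classical

/-- Adjacency in the grid graph `ℤ^m`: two vertices are adjacent iff they differ by `±1`
in exactly one coordinate. -/
def gridAdj (m : ℕ) (x y : Fin m → ℤ) : Prop :=
  ∃ j, (y j = x j + 1 ∨ y j = x j - 1) ∧ ∀ i, i ≠ j → y i = x i

/-- `S ⊆ ℤ^m` is an independent exact `r`-cover if `S` is an independent set in the grid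
graph `ℤ^m` and every vertex not in `S` is adjacent to exactly `r` elements of `S`. -/
def IsIndepExactCover (m r : ℕ) (S : Set (Fin m → ℤ)) : Prop :=
  (∀ x ∈ S, ∀ y ∈ S, ¬ gridAdj m x y) ∧
    ∀ x ∉ S, {y | y ∈ S ∧ gridAdj m x y}.ncard = r


/-!
Take `k = 4mK` and `t = (2m − r)K`. Lift each vertex `v` of the torus `[k]^m` to the box
`[0,k)^m ⊆ ℤ^m` and colour it blue if its lift lies in the slab `x₀ < t` or in `S`.
Away from the seams of the box and from the two layers `x₀ ∈ {t − 1, t}`, a blue vertex of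
the slab has `2m` blue neighbours, a blue vertex of `S` has none (independence), and a red
vertex has exactly `2m − r` red neighbours (exact `r`-cover).

Double counting the edges between `S` and its complement inside the box `x₀ ≥ t`, of size
`(2m + r)K·k^(m-1)`, shows that `S` fills `rK·k^(m-1)` of it up to `2m·k^(m-1)`, so the blue
class has `k^m / 2 = (t + rK)·k^(m-1)` vertices up to that error; recolouring that many vertices
above the slab balances the colouring. The vertices whose degree is not the generic one then
number `O(m² k^(m-1))`, which moves `P₂` of either class by `O(m / K)` from
`((2m − r)/2m)²` (red) and `t/2mK = (2m − r)/2m` (blue).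
-/

section Neighbours

variable {R : Type*} [Ring R] {m : ℕ}

def nbr (x : Fin m → R) (p : Fin m × Bool) : Fin m → R :=
  x + Pi.single p.1 (if p.2 then 1 else -1)

@[simp]
lemma nbr_apply_self (x : Fin m → R) (i : Fin m) (b : Bool) :
    nbr x (i, b) i = x i + if b then 1 else -1 := by
  simp [nbr]

@[simp]
lemma nbr_apply_of_ne (x : Fin m → R) {i j : Fin m} (b : Bool) (hj : j ≠ i) :
    nbr x (i, b) j = x j := by
  simp [nbr, hj]

lemma nbr_nbr_not (x : Fin m → R) (p : Fin m × Bool) : nbr (nbr x p) (p.1, !p.2) = x := by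
  rcases p with ⟨i, _ | _⟩ <;> simp [nbr, add_assoc, ← Pi.single_add]

lemma nbr_ne_self (h1 : (1 : R) ≠ 0) (x : Fin m → R) (p : Fin m × Bool) : nbr x p ≠ x := by
  rcases p with ⟨i, b⟩
  intro h
  have := congrFun h i
  cases b <;> simp_all

lemma nbr_injective (h2 : (2 : R) ≠ 0) (x : Fin m → R) : Function.Injective (nbr x) := by
  have h1 : (1 : R) ≠ 0 := fun h => h2 (by rw [← one_add_one_eq_two, h, add_zero])
  have hne : (-1 : R) ≠ 1 := fun h => h2 (by rw [← one_add_one_eq_two]; nth_rw 1 [← h]; simp)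
  rintro ⟨i, b⟩ ⟨j, c⟩ h
  obtain rfl : i = j := by
    by_contra hij
    have := congrFun h i
    rw [nbr_apply_self, nbr_apply_of_ne _ _ hij] at this
    cases b <;> simp_all
  have := congrFun h i
  rw [nbr_apply_self, nbr_apply_self] at this
  cases b <;> cases c <;> simp_all [eq_comm]

lemma exists_eq_nbr_iff (x y : Fin m → R) :
    (∃ j, (y j = x j + 1 ∨ y j = x j - 1) ∧ ∀ i, i ≠ j → y i = x i) ↔ ∃ p, y = nbr x p := by
  constructor
  · rintro ⟨j, hj, hy⟩
    refine ⟨(j, decide (y j = x j + 1)), funext fun i => ?_⟩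
    by_cases hi : i = j
    · subst hi; rcases hj with hj | hj <;> simp [hj, sub_eq_add_neg]
    · rw [hy i hi, nbr_apply_of_ne _ _ hi]
  · rintro ⟨⟨j, b⟩, rfl⟩
    refine ⟨j, ?_, fun i hi => nbr_apply_of_ne _ _ hi⟩
    cases b <;> simp [sub_eq_add_neg]

lemma map_comp_nbr {S : Type*} [Ring S] (f : R →+* S) (x : Fin m → R) (p : Fin m × Bool) :
    f ∘ nbr x p = nbr (f ∘ x) p := by
  rcases p with ⟨i, b⟩
  funext j
  by_cases hj : j = i
  · subst hj; cases b <;> simp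
  · simp [hj]

lemma card_filter_nbr_le (P : (Fin m → R) → Prop) [DecidablePred P] (x : Fin m → R) :
    #{p | P (nbr x p)} ≤ 2 * m :=
  (card_filter_le _ _).trans (by simp [mul_comm])

variable [DecidableEq R]

def nbhd (T : Finset (Fin m → R)) : Finset (Fin m → R) :=
  T ∪ T.biUnion fun w => univ.image (nbr w)

lemma notMem_of_notMem_nbhd {T : Finset (Fin m → R)} {v : Fin m → R} (hv : v ∉ nbhd T) :
    v ∉ T :=
  fun h => hv (mem_union_left _ h)

lemma mem_nbhd_of_nbr_mem {T : Finset (Fin m → R)} {v : Fin m → R} {p : Fin m × Bool}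
    (h : nbr v p ∈ T) : v ∈ nbhd T :=
  mem_union_right _ <| mem_biUnion.2 ⟨_, h, mem_image.2 ⟨_, mem_univ _, nbr_nbr_not v p⟩⟩

lemma card_nbhd_le (T : Finset (Fin m → R)) : #(nbhd T) ≤ (2 * m + 1) * #T := by
  calc #(nbhd T) ≤ #T + ∑ w ∈ T, #(univ.image (nbr w)) :=
        (card_union_le _ _).trans (Nat.add_le_add_left card_biUnion_le _)
    _ ≤ #T + ∑ _w ∈ T, 2 * m := by
        gcongr with w
        exact card_image_le.trans (by simp [mul_comm])
    _ = (2 * m + 1) * #T := by rw [sum_const, smul_eq_mul]; ring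

lemma sum_card_nbr_mem_comm (X Y : Finset (Fin m → R)) :
    ∑ x ∈ X, #{p | nbr x p ∈ Y} = ∑ y ∈ Y, #{p | nbr y p ∈ X} := by
  have hpairs (X Y : Finset (Fin m → R)) :
      ∑ x ∈ X, #{p | nbr x p ∈ Y} = #{q ∈ X ×ˢ univ | nbr q.1 q.2 ∈ Y} := by
    rw [card_filter, sum_product]
    exact sum_congr rfl fun x _ => card_filter _ _
  rw [hpairs, hpairs]
  let flip (q : (Fin m → R) × (Fin m × Bool)) := (nbr q.1 q.2, (q.2.1, !q.2.2))
  have hflip (q) : flip (flip q) = q := by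
    simp only [flip, nbr_nbr_not, Bool.not_not]
  refine card_nbij' flip flip ?_ ?_ (fun q _ => hflip q) (fun q _ => hflip q)
  all_goals
    intro q hq
    simp only [coe_filter, Set.mem_ofPred_eq, mem_product, mem_univ, and_true] at hq ⊢
    simp only [flip, nbr_nbr_not]
    exact hq.symm

def innerBoundary (Q : Finset (Fin m → R)) : Finset (Fin m → R) :=
  {x ∈ Q | ∃ p, nbr x p ∉ Q}

end Neighbours

lemma mul_card_le_sum_add_mul_card {α : Type*} [DecidableEq α] {s t : Finset α} {f : α → ℕ}
    {c : ℕ} (h : ∀ x ∈ s, x ∉ t → c ≤ f x) : c * #s ≤ ∑ x ∈ s, f x + c * #t := by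
  have hsd : c * #(s \ t) ≤ ∑ x ∈ s \ t, f x := by
    simpa [mul_comm] using
      card_nsmul_le_sum (s \ t) f c fun x hx => h x (mem_sdiff.1 hx).1 (mem_sdiff.1 hx).2
  calc c * #s ≤ c * (#(s \ t) + #t) := Nat.mul_le_mul_left _ card_le_card_sdiff_add_card
    _ ≤ ∑ x ∈ s, f x + c * #t := by
        rw [mul_add]
        exact Nat.add_le_add_right (hsd.trans (sum_le_sum_of_subset sdiff_subset)) _

lemma Finset.exists_subset_card_eq_card_symmDiff_le {α : Type*} [DecidableEq α]
    {A U : Finset α} (hAU : A ⊆ U) {n : ℕ} (hn : n ≤ #U) :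
    ∃ X ⊆ U, #X = n ∧ (#(symmDiff X A) : ℤ) ≤ |(#A : ℤ) - n| := by
  rcases le_total n #A with hnA | hAn
  · obtain ⟨X, hXA, hX⟩ := exists_subset_card_eq hnA
    refine ⟨X, hXA.trans hAU, hX, ?_⟩
    rw [symmDiff_of_le hXA, card_sdiff_of_subset hXA, hX, Nat.cast_sub hnA]
    exact le_abs_self _
  · obtain ⟨X, hAX, hXU, hX⟩ := exists_subsuperset_card_eq hAU hAn hn
    refine ⟨X, hXU, hX, ?_⟩
    rw [symmDiff_of_ge hAX, card_sdiff_of_subset hAX, hX, Nat.cast_sub hAn, abs_sub_comm]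
    exact le_abs_self _

section Grid

open Fintype

variable {m r : ℕ} {S : Set (Fin m → ℤ)}

lemma gridAdj_iff (x y : Fin m → ℤ) : gridAdj m x y ↔ ∃ p, y = nbr x p :=
  exists_eq_nbr_iff x y

lemma abs_nbr_apply_sub_le (x : Fin m → ℤ) (p : Fin m × Bool) (j : Fin m) :
    |nbr x p j - x j| ≤ 1 := by
  rcases p with ⟨i, b⟩
  by_cases hj : j = i
  · subst hj; cases b <;> simp
  · simp [hj]

namespace IsIndepExactCover

lemma nbr_notMem (hS : IsIndepExactCover m r S) {x : Fin m → ℤ} (hx : x ∈ S)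
    (p : Fin m × Bool) : nbr x p ∉ S :=
  fun h => hS.1 x hx _ h ((gridAdj_iff _ _).2 ⟨p, rfl⟩)

lemma card_nbr_mem (hS : IsIndepExactCover m r S) {x : Fin m → ℤ} (hx : x ∉ S) :
    #{p | nbr x p ∈ S} = r := by
  have hset : {y | y ∈ S ∧ gridAdj m x y}
      = (({p | nbr x p ∈ S} : Finset _).image (nbr x) : Set (Fin m → ℤ)) := by
    ext y
    simp only [gridAdj_iff, coe_image, coe_filter, mem_univ, true_and]
    aesop
  rw [← hS.2 x hx, hset, Set.ncard_coe_finset,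
    card_image_of_injective _ (nbr_injective (by norm_num) x)]

lemma card_nbr_notMem (hS : IsIndepExactCover m r S) {x : Fin m → ℤ} (hx : x ∉ S) :
    #{p | nbr x p ∉ S} = 2 * m - r := by
  have := card_filter_add_card_filter_not (s := (univ : Finset (Fin m × Bool)))
    (fun p => nbr x p ∈ S)
  rw [card_nbr_mem hS hx, card_univ, Fintype.card_prod, Fintype.card_fin,
    Fintype.card_bool] at this
  omega

lemma abs_card_filter_mem_sub_le (hS : IsIndepExactCover m r S) (hr : r ≤ 2 * m)
    (Q : Finset (Fin m → ℤ)) :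
    |((2 * m + r) * #{x ∈ Q | x ∈ S} : ℤ) - r * #Q| ≤ 2 * m * #(innerBoundary Q) := by
  set QS := Q.filter (· ∈ S)
  set QN := Q.filter (· ∉ S)
  have hQ : #QS + #QN = #Q := card_filter_add_card_filter_not _
  have interior {x} (hx : x ∈ Q) (hx' : x ∉ innerBoundary Q) (p : Fin m × Bool) :
      nbr x p ∈ Q := by
    by_contra h
    exact hx' (mem_filter.2 ⟨hx, p, h⟩)
  have hS_le : ∑ x ∈ QS, #{p | nbr x p ∈ QN} ≤ 2 * m * #QS := by
    simpa [mul_comm] using sum_le_card_nsmul QS _ _ fun x _ => card_filter_nbr_le (· ∈ QN) x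
  have hN_le : ∑ y ∈ QN, #{p | nbr y p ∈ QS} ≤ r * #QN := by
    refine (sum_le_card_nsmul QN _ r fun y hy => ?_).trans (by simp [mul_comm])
    rw [← card_nbr_mem hS (mem_filter.1 hy).2]
    exact card_le_card fun p => by simp +contextual [QS]
  have hS_ge : 2 * m * #QS ≤ ∑ x ∈ QS, #{p | nbr x p ∈ QN} + 2 * m * #(innerBoundary Q) := by
    refine mul_card_le_sum_add_mul_card fun x hx hx' => ?_
    rw [mem_filter] at hx
    rw [filter_true_of_mem fun p _ => mem_filter.2 ⟨interior hx.1 hx' p, hS.nbr_notMem hx.2 p⟩]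
    simp [mul_comm]
  have hN_ge : r * #QN ≤ ∑ y ∈ QN, #{p | nbr y p ∈ QS} + r * #(innerBoundary Q) := by
    refine mul_card_le_sum_add_mul_card fun y hy hy' => ?_
    rw [mem_filter] at hy
    rw [← card_nbr_mem hS hy.2]
    exact card_le_card fun p => by simp +contextual [QS, interior hy.1 hy']
  rw [sum_card_nbr_mem_comm QS QN] at hS_le hS_ge
  have hrb : r * #(innerBoundary Q) ≤ 2 * m * #(innerBoundary Q) := Nat.mul_le_mul_right _ hr
  rw [← hQ, abs_le]
  zify at *
  constructor <;> linarith

end IsIndepExactCover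

def blueSet (j : Fin m) (t : ℤ) (S : Set (Fin m → ℤ)) : Set (Fin m → ℤ) :=
  {x | x j < t ∨ x ∈ S}

lemma card_nbr_mem_blueSet (hS : IsIndepExactCover m r S) {j : Fin m} {t : ℤ} {x : Fin m → ℤ}
    (hx : x ∈ blueSet j t S) (ht : x j + 1 ≠ t) (ht' : x j ≠ t) :
    #{p | nbr x p ∈ blueSet j t S} = if x j < t then 2 * m else 0 := by
  have hnbr := fun p => abs_le.1 (abs_nbr_apply_sub_le x p j)
  split_ifs with hxt
  · have hall (p : Fin m × Bool) : nbr x p ∈ blueSet j t S :=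
      Or.inl (by have := hnbr p; omega)
    rw [filter_true_of_mem fun p _ => hall p]
    simp [mul_comm]
  · have hxS : x ∈ S := hx.resolve_left hxt
    rw [card_eq_zero, filter_eq_empty_iff]
    rintro p - (h | h)
    · have := hnbr p; omega
    · exact hS.nbr_notMem hxS p h

lemma card_nbr_notMem_blueSet (hS : IsIndepExactCover m r S) {j : Fin m} {t : ℤ}
    {x : Fin m → ℤ} (hx : x ∉ blueSet j t S) (ht : x j ≠ t) :
    #{p | nbr x p ∉ blueSet j t S} = 2 * m - r := by
  simp only [blueSet, Set.mem_ofPred_eq, not_or, not_lt] at hx ⊢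
  rw [← hS.card_nbr_notMem hx.2]
  congr 1
  ext p
  have := abs_le.1 (abs_nbr_apply_sub_le x p j)
  simp only [mem_filter, mem_univ, true_and, and_iff_right_iff_imp]
  intro _
  omega

lemma card_filter_piFinset_exists_eq_le {α : Type*} [DecidableEq α] {k : ℕ}
    {s : Fin m → Finset α} (hs : ∀ i, #(s i) ≤ k) (F : Finset (Fin m × α)) :
    #{x ∈ piFinset s | ∃ q ∈ F, x q.1 = q.2} ≤ #F * k ^ (m - 1) := by
  have hslice (q : Fin m × α) : #{x ∈ piFinset s | x q.1 = q.2} ≤ k ^ (m - 1) := by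
    calc #{x ∈ piFinset s | x q.1 = q.2}
        = if q.2 ∈ s q.1 then ∏ b ∈ univ.erase q.1, #(s b) else 0 := by
          convert card_filter_piFinset_eq s q.1 q.2
      _ ≤ ∏ _b ∈ univ.erase q.1, k := by
          split_ifs
          exacts [prod_le_prod' fun b _ => hs b, Nat.zero_le _]
      _ = k ^ (m - 1) := by simp [card_erase_of_mem]
  calc #{x ∈ piFinset s | ∃ q ∈ F, x q.1 = q.2}
      ≤ #(F.biUnion fun q => {x ∈ piFinset s | x q.1 = q.2}) :=
        card_le_card fun x hx => by
          obtain ⟨hx, q, hq, hxq⟩ := mem_filter.1 hx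
          exact mem_biUnion.2 ⟨q, hq, mem_filter.2 ⟨hx, hxq⟩⟩
    _ ≤ ∑ q ∈ F, #{x ∈ piFinset s | x q.1 = q.2} := card_biUnion_le
    _ ≤ #F * k ^ (m - 1) := by simpa using sum_le_card_nsmul F _ _ fun q _ => hslice q

lemma card_innerBoundary_box_le {k : ℕ} {lo hi : Fin m → ℤ} (h : ∀ i, hi i - lo i ≤ k) :
    #(innerBoundary (piFinset fun i => Ico (lo i) (hi i))) ≤ 2 * m * k ^ (m - 1) := by
  let F : Finset (Fin m × ℤ) :=
    univ.image fun p : Fin m × Bool => (p.1, if p.2 then hi p.1 - 1 else lo p.1)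
  have hF : #F ≤ 2 * m := card_image_le.trans (by simp [mul_comm])
  refine le_trans (card_le_card fun x hx => ?_)
    ((card_filter_piFinset_exists_eq_le (s := fun i => Ico (lo i) (hi i))
      (fun i => by simpa using h i) F).trans (Nat.mul_le_mul_right _ hF))
  obtain ⟨hx, ⟨i, b⟩, hnot⟩ := mem_filter.1 hx
  refine mem_filter.2 ⟨hx, (i, if b then hi i - 1 else lo i),
    mem_image_of_mem _ (mem_univ (i, b)), ?_⟩
  simp only [mem_piFinset, mem_Ico] at hx hnot
  push Not at hnot
  obtain ⟨j, hj⟩ := hnot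
  by_cases hji : j = i
  · subst hji
    have := hx j
    cases b <;> simp at hj ⊢ <;> omega
  · rw [nbr_apply_of_ne _ _ hji] at hj
    exact absurd (hx j).2 (not_lt.2 (hj (hx j).1))

lemma filter_le_apply_piFinset_Ico (j : Fin m) {a : ℤ} (ha : 0 ≤ a) (b : ℤ) :
    {x ∈ piFinset (fun _ : Fin m => Ico 0 b) | a ≤ x j}
      = piFinset fun i => Ico (Function.update (0 : Fin m → ℤ) j a i) b := by
  ext x
  simp only [mem_filter, mem_piFinset, mem_Ico]
  constructor
  · rintro ⟨hx, hxj⟩ i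
    by_cases hi : i = j
    · subst hi; simpa using ⟨hxj, (hx i).2⟩
    · simpa [hi] using hx i
  · intro hx
    refine ⟨fun i => ?_, by simpa using (hx j).1⟩
    by_cases hi : i = j
    · subst hi; have := hx i; simp at this; exact ⟨by omega, this.2⟩
    · simpa [hi] using hx i

lemma card_piFinset_Ico_update (j : Fin m) (a b : ℕ) :
    #(piFinset fun i => Ico (Function.update (0 : Fin m → ℤ) j a i) b)
      = (b - a) * b ^ (m - 1) := by
  rw [card_piFinset, ← mul_prod_erase univ _ (mem_univ j)]
  congr 1
  · simp
  · rw [Finset.prod_congr rfl fun i hi => by rw [Function.update_of_ne (ne_of_mem_erase hi)]]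
    simp [card_erase_of_mem]

end Grid

section Torus

open Fintype

variable {m r k : ℕ} {S : Set (Fin m → ℤ)}

lemma ZMod.two_ne_zero_of_three_le (hk : 3 ≤ k) : (2 : ZMod k) ≠ 0 := by
  have : ¬ k ∣ 2 := fun h => by have := Nat.le_of_dvd two_pos h; omega
  exact_mod_cast mt (ZMod.natCast_eq_zero_iff 2 k).1 this

lemma torusAdj_iff (hk : 3 ≤ k) (v w : Fin m → ZMod k) :
    torusAdj m k v w ↔ ∃ p, w = nbr v p := by
  have h2 := ZMod.two_ne_zero_of_three_le hk
  refine ⟨fun h => (exists_eq_nbr_iff v w).1 h.2, ?_⟩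
  rintro ⟨p, rfl⟩
  exact ⟨(nbr_ne_self (fun h => h2 (by rw [← one_add_one_eq_two, h, add_zero])) v p).symm,
    (exists_eq_nbr_iff v _).2 ⟨p, rfl⟩⟩

lemma torusDegIn_eq (hk : 3 ≤ k) (T : Finset (Fin m → ZMod k)) (v : Fin m → ZMod k) :
    torusDegIn m k T v = #{p | nbr v p ∈ T} := by
  rw [torusDegIn,
    ← card_image_of_injective _ (nbr_injective (ZMod.two_ne_zero_of_three_le hk) v)]
  congr 1
  ext w
  simp only [mem_filter, mem_image, mem_univ, true_and, torusAdj_iff hk]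
  aesop

lemma torusDegIn_le (T : Finset (Fin m → ZMod k)) (v : Fin m → ZMod k) :
    torusDegIn m k T v ≤ 2 * m :=
  (card_le_card fun w hw => mem_image.2 <| by
      obtain ⟨p, rfl⟩ := (exists_eq_nbr_iff v w).1 (mem_filter.1 hw).2.2
      exact ⟨p, mem_univ _, rfl⟩).trans
    (card_image_le.trans (by simp [mul_comm]) : #(univ.image (nbr v)) ≤ 2 * m)

lemma abs_torusP2_sub_le {T Bad : Finset (Fin m → ZMod k)} {d : (Fin m → ZMod k) → ℕ}
    (hd : ∀ v ∈ T, v ∉ Bad → torusDegIn m k T v = d v) (hd_le : ∀ v ∈ T, d v ≤ 2 * m) :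
    |torusP2 m k T - (∑ v ∈ T, (d v : ℝ) ^ 2) / (#T * (2 * m) ^ 2)| ≤ (#Bad : ℝ) / #T := by
  rw [torusP2, ← sub_div, ← sum_sub_distrib, abs_div]
  rcases eq_or_ne ((#T : ℝ) * (2 * m) ^ 2) 0 with h0 | h0
  · rw [h0]; simp only [abs_zero, div_zero]; positivity
  have hsq_le {n : ℕ} (hn : n ≤ 2 * m) : ((n : ℝ)) ^ 2 ≤ (2 * m) ^ 2 := by
    gcongr; exact_mod_cast hn
  have hnum : |∑ v ∈ T, ((torusDegIn m k T v : ℝ) ^ 2 - (d v : ℝ) ^ 2)| ≤ #Bad * (2 * m) ^ 2 :=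
    calc _ ≤ ∑ v ∈ T, |(torusDegIn m k T v : ℝ) ^ 2 - (d v : ℝ) ^ 2| := abs_sum_le_sum_abs _ _
      _ = ∑ v ∈ T with v ∈ Bad, |(torusDegIn m k T v : ℝ) ^ 2 - (d v : ℝ) ^ 2| := by
          refine (sum_filter_of_ne fun v hv hne => ?_).symm
          by_contra hvBad
          simp [hd v hv hvBad] at hne
      _ ≤ ∑ v ∈ T with v ∈ Bad, ((2 : ℝ) * m) ^ 2 :=
          sum_le_sum fun v hv => abs_sub_le_of_nonneg_of_le (by positivity)
            (hsq_le (torusDegIn_le T v)) (by positivity) (hsq_le (hd_le v (mem_filter.1 hv).1))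
      _ ≤ #Bad * (2 * m) ^ 2 := by
          rw [sum_const, nsmul_eq_mul]
          gcongr
          exact fun v hv => (mem_filter.1 hv).2
  calc |∑ v ∈ T, ((torusDegIn m k T v : ℝ) ^ 2 - (d v : ℝ) ^ 2)| / |(#T : ℝ) * (2 * m) ^ 2|
      ≤ #Bad * (2 * m) ^ 2 / (#T * (2 * m) ^ 2) := by
        rw [abs_of_nonneg (by positivity : (0 : ℝ) ≤ #T * (2 * m) ^ 2)]
        exact div_le_div_of_nonneg_right hnum (by positivity)
    _ = #Bad / #T := mul_div_mul_right _ _ (right_ne_zero_of_mul h0)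

def rep (v : Fin m → ZMod k) : Fin m → ℤ := fun i => (v i).val

variable [NeZero k]

lemma rep_mem_piFinset (v : Fin m → ZMod k) : rep v ∈ piFinset fun _ => Ico 0 (k : ℤ) :=
  mem_piFinset.2 fun i => mem_Ico.2 ⟨Int.natCast_nonneg _, Int.ofNat_lt.2 (ZMod.val_lt (v i))⟩

lemma intCast_comp_rep (v : Fin m → ZMod k) : Int.cast ∘ rep v = v := by
  funext i
  simp [rep]

lemma rep_intCast_comp {x : Fin m → ℤ} (hx : x ∈ piFinset fun _ => Ico 0 (k : ℤ)) :
    rep (Int.cast ∘ x : Fin m → ZMod k) = x := by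
  funext i
  have := mem_Ico.1 (mem_piFinset.1 hx i)
  exact (ZMod.val_intCast (x i)).trans (Int.emod_eq_of_lt this.1 this.2)

lemma card_filter_rep (P : (Fin m → ℤ) → Prop) [DecidablePred P] :
    #{v : Fin m → ZMod k | P (rep v)} = #{x ∈ piFinset (fun _ => Ico 0 (k : ℤ)) | P x} := by
  refine card_nbij' rep (Int.cast ∘ · : (Fin m → ℤ) → Fin m → ZMod k) ?_ ?_
    (fun v _ => intCast_comp_rep v) (fun x hx => rep_intCast_comp (mem_filter.1 hx).1)
  · intro v hv
    simp only [coe_filter, mem_univ, true_and, Set.mem_ofPred_eq] at hv ⊢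
    exact ⟨rep_mem_piFinset v, hv⟩
  · intro x hx
    simp only [coe_filter, mem_univ, true_and, Set.mem_ofPred_eq] at hx ⊢
    convert hx.2
    exact rep_intCast_comp hx.1

lemma rep_nbr {v : Fin m → ZMod k} (hv : ∀ i, rep v i ≠ 0 ∧ rep v i ≠ k - 1)
    (p : Fin m × Bool) : rep (nbr v p) = nbr (rep v) p := by
  have hmem : nbr (rep v) p ∈ piFinset fun _ => Ico 0 (k : ℤ) := by
    rcases p with ⟨i, b⟩
    simp only [mem_piFinset, mem_Ico]
    intro j
    have := mem_Ico.1 (mem_piFinset.1 (rep_mem_piFinset v) j)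
    by_cases hj : j = i
    · subst hj; have := hv j; cases b <;> simp <;> omega
    · simpa [hj] using this
  conv_lhs => rw [← intCast_comp_rep v]
  rw [show (Int.cast ∘ rep v : Fin m → ZMod k) = Int.castRingHom _ ∘ rep v from rfl,
    ← map_comp_nbr]
  exact rep_intCast_comp hmem

lemma card_filter_le_rep_apply (j : Fin m) (t : ℕ) (P : (Fin m → ℤ) → Prop)
    [DecidablePred P] :
    #{v : Fin m → ZMod k | t ≤ rep v j ∧ P (rep v)}
      = #{x ∈ piFinset (fun i => Ico (Function.update (0 : Fin m → ℤ) j t i) k) | P x} := by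
  rw [card_filter_rep (fun x => t ≤ x j ∧ P x), ← filter_le_apply_piFinset_Ico j (by positivity),
    filter_filter]

lemma card_filter_le_rep (j : Fin m) (t : ℕ) :
    #{v : Fin m → ZMod k | t ≤ rep v j} = (k - t) * k ^ (m - 1) := by
  have := card_filter_le_rep_apply (k := k) j t fun _ => True
  simp only [and_true] at this
  rw [this, filter_true, card_piFinset_Ico_update]

lemma card_filter_rep_lt (j : Fin m) {t : ℕ} (ht : t ≤ k) :
    #{v : Fin m → ZMod k | rep v j < t} = t * k ^ (m - 1) := by
  have hkm : k ^ m = t * k ^ (m - 1) + (k - t) * k ^ (m - 1) := by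
    rw [← add_mul, Nat.add_sub_cancel' ht, ← pow_succ']
    congr 1
    have := j.pos
    omega
  have := card_filter_add_card_filter_not (s := (univ : Finset (Fin m → ZMod k)))
    (fun v => rep v j < (t : ℤ))
  simp only [not_lt, card_filter_le_rep, card_univ, Fintype.card_fun, ZMod.card,
    Fintype.card_fin, hkm] at this
  omega

lemma IsIndepExactCover.abs_card_filter_le_rep_sub_le (hS : IsIndepExactCover m r S)
    (hr : r ≤ 2 * m) (j : Fin m) {t K : ℕ} (hkt : k - t = (2 * m + r) * K) :
    |(#{v : Fin m → ZMod k | t ≤ rep v j ∧ rep v ∈ S} : ℤ) - (r * K * k ^ (m - 1) : ℕ)|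
      ≤ (2 * m * k ^ (m - 1) : ℕ) := by
  have hbox := card_innerBoundary_box_le (k := k) (lo := Function.update 0 j (t : ℤ))
    (hi := fun _ => k) fun i => by by_cases hi : i = j <;> simp [hi]
  have h := hS.abs_card_filter_mem_sub_le hr
    (piFinset fun i => Ico (Function.update (0 : Fin m → ℤ) j t i) k)
  rw [← card_filter_le_rep_apply, card_piFinset_Ico_update, hkt] at h
  have hpos : (0 : ℤ) < 2 * m + r := by have := j.pos; positivity
  refine le_of_mul_le_mul_left ?_ hpos
  push_cast at h ⊢
  calc (2 * m + r) * |(#{v : Fin m → ZMod k | t ≤ rep v j ∧ rep v ∈ S} : ℤ) - r * K * k ^ (m - 1)|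
      = |(2 * m + r) * (#{v : Fin m → ZMod k | t ≤ rep v j ∧ rep v ∈ S} : ℤ)
          - r * ((2 * m + r) * K * k ^ (m - 1))| := by
        rw [← abs_of_pos hpos, ← abs_mul, abs_of_pos hpos]; ring_nf
    _ ≤ 2 * m * (2 * m * k ^ (m - 1)) := h.trans (by gcongr; exact_mod_cast hbox)
    _ ≤ (2 * m + r) * (2 * m * k ^ (m - 1)) := by gcongr; linarith

end Torus

section Colouring

open Fintype

variable {m r k : ℕ} {S : Set (Fin m → ℤ)} [NeZero k] {j : Fin m} {t : ℤ}
  {B W : Finset (Fin m → ZMod k)}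

-- the seams of the box `[0,k)^m`, where `rep` need not commute with `nbr`, and the two layers
-- `x j ∈ {t - 1, t}` at the top of the slab
def defectSet (j : Fin m) (t : ℤ) : Finset (Fin m → ZMod k) :=
  {v | (∃ i, rep v i = 0 ∨ rep v i = k - 1) ∨ rep v j + 1 = t ∨ rep v j = t}

lemma rep_ne_of_notMem_defectSet {v : Fin m → ZMod k} (hv : v ∉ defectSet j t) :
    (∀ i, rep v i ≠ 0 ∧ rep v i ≠ k - 1) ∧ rep v j + 1 ≠ t ∧ rep v j ≠ t := by
  simpa [defectSet, not_or] using hv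

lemma card_defectSet_le (j : Fin m) (t : ℤ) :
    #(defectSet (k := k) j t) ≤ (2 * m + 2) * k ^ (m - 1) := by
  let F : Finset (Fin m × ℤ) :=
    univ.image (fun p : Fin m × Bool => (p.1, if p.2 then (k : ℤ) - 1 else 0)) ∪
      {(j, t - 1), (j, t)}
  have hF : #F ≤ 2 * m + 2 :=
    (card_union_le _ _).trans
      (Nat.add_le_add (card_image_le.trans (by simp [mul_comm])) card_le_two)
  calc #(defectSet (k := k) j t) = #{v : Fin m → ZMod k | ∃ q ∈ F, rep v q.1 = q.2} := by
        congr 1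
        ext v
        simp only [defectSet, mem_filter, mem_univ, true_and, F, mem_union, mem_image,
          mem_insert, mem_singleton]
        constructor
        · rintro ((⟨i, hi | hi⟩ | h | h))
          · exact ⟨_, Or.inl ⟨(i, false), rfl⟩, hi⟩
          · exact ⟨_, Or.inl ⟨(i, true), rfl⟩, hi⟩
          · exact ⟨_, Or.inr (Or.inl rfl), by simp; omega⟩
          · exact ⟨_, Or.inr (Or.inr rfl), h⟩
        · rintro ⟨q, (⟨⟨i, b⟩, rfl⟩ | rfl | rfl), hq⟩
          · cases b <;> simp only [Bool.false_eq_true, if_false, if_true] at hq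
            exacts [Or.inl ⟨i, Or.inl hq⟩, Or.inl ⟨i, Or.inr hq⟩]
          · simp at hq; omega
          · exact Or.inr (Or.inr hq)
    _ = #{x ∈ piFinset (fun _ => Ico 0 (k : ℤ)) | ∃ q ∈ F, x q.1 = q.2} :=
        card_filter_rep (fun x => ∃ q ∈ F, x q.1 = q.2)
    _ ≤ #F * k ^ (m - 1) := card_filter_piFinset_exists_eq_le (fun _ => by simp) F
    _ ≤ (2 * m + 2) * k ^ (m - 1) := Nat.mul_le_mul_right _ hF

lemma card_nbhd_union_defectSet_le :
    #(nbhd W ∪ defectSet j t) ≤ (2 * m + 1) * #W + (2 * m + 2) * k ^ (m - 1) :=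
  (card_union_le _ _).trans (Nat.add_le_add (card_nbhd_le W) (card_defectSet_le j t))

lemma torusDegIn_eq_card_nbr_rep (hk : 3 ≤ k) {T : Finset (Fin m → ZMod k)}
    {P : Set (Fin m → ℤ)} (hT : ∀ v ∉ W, v ∈ T ↔ rep v ∈ P) {v : Fin m → ZMod k}
    (hv : v ∉ nbhd W) (hint : ∀ i, rep v i ≠ 0 ∧ rep v i ≠ k - 1) :
    torusDegIn m k T v = #{p | nbr (rep v) p ∈ P} := by
  rw [torusDegIn_eq hk]
  congr 1
  ext p
  simp only [mem_filter, mem_univ, true_and]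
  rw [hT _ fun h => hv (mem_nbhd_of_nbr_mem h), rep_nbr hint]

lemma torusDegIn_of_mem (hS : IsIndepExactCover m r S) (hk : 3 ≤ k)
    (hB : ∀ v ∉ W, v ∈ B ↔ rep v ∈ blueSet j t S) {v : Fin m → ZMod k} (hvB : v ∈ B)
    (hvW : v ∉ nbhd W) (hvZ : v ∉ defectSet j t) :
    torusDegIn m k B v = if rep v j < t then 2 * m else 0 := by
  obtain ⟨hint, ht, ht'⟩ := rep_ne_of_notMem_defectSet hvZ
  rw [torusDegIn_eq_card_nbr_rep hk hB hvW hint]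
  exact card_nbr_mem_blueSet hS ((hB v (notMem_of_notMem_nbhd hvW)).1 hvB) ht ht'

lemma torusDegIn_compl_of_notMem (hS : IsIndepExactCover m r S) (hk : 3 ≤ k)
    (hB : ∀ v ∉ W, v ∈ B ↔ rep v ∈ blueSet j t S) {v : Fin m → ZMod k} (hvB : v ∉ B)
    (hvW : v ∉ nbhd W) (hvZ : v ∉ defectSet j t) :
    torusDegIn m k Bᶜ v = 2 * m - r := by
  obtain ⟨hint, -, ht'⟩ := rep_ne_of_notMem_defectSet hvZ
  have hBc : ∀ v ∉ W, v ∈ Bᶜ ↔ rep v ∈ (blueSet j t S)ᶜ := fun v hv => by simp [hB v hv]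
  rw [torusDegIn_eq_card_nbr_rep hk hBc hvW hint]
  convert card_nbr_notMem_blueSet hS (fun h => hvB ((hB v (notMem_of_notMem_nbhd hvW)).2 h)) ht'

lemma abs_torusP2_sub_of_agree_le (hS : IsIndepExactCover m r S) (hk : 3 ≤ k)
    (hB : ∀ v ∉ W, v ∈ B ↔ rep v ∈ blueSet j t S) (hlow : ∀ v, rep v j < t → v ∈ B) :
    |torusP2 m k B - #{v : Fin m → ZMod k | rep v j < t} / #B|
      ≤ (((2 * m + 1) * #W + (2 * m + 2) * k ^ (m - 1) : ℕ) : ℝ) / #B := by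
  have hm : (m : ℝ) ≠ 0 := by have := j.pos; positivity
  have hsum : ∑ v ∈ B, (((if rep v j < t then 2 * m else 0 : ℕ) : ℝ)) ^ 2
      = #{v : Fin m → ZMod k | rep v j < t} * (2 * m) ^ 2 := by
    have hfilter : ({v ∈ B | rep v j < t} : Finset (Fin m → ZMod k))
        = ({v | rep v j < t} : Finset (Fin m → ZMod k)) := by
      ext v
      simpa using hlow v
    simp only [apply_ite (fun n : ℕ => (n : ℝ) ^ 2), Nat.cast_zero, sum_ite, sum_const,
      nsmul_eq_mul, hfilter]
    push_cast
    ring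
  have := abs_torusP2_sub_le (Bad := nbhd W ∪ defectSet j t)
    (d := fun v => if rep v j < t then 2 * m else 0)
    (fun v hv hbad => torusDegIn_of_mem hS hk hB hv (fun h => hbad (mem_union_left _ h))
      (fun h => hbad (mem_union_right _ h)))
    (fun v _ => by split_ifs <;> omega)
  rw [hsum, mul_div_mul_right _ _ (by positivity)] at this
  refine this.trans (div_le_div_of_nonneg_right ?_ (by positivity))
  exact_mod_cast card_nbhd_union_defectSet_le

lemma abs_torusP2_compl_sub_of_agree_le (hS : IsIndepExactCover m r S) (hk : 3 ≤ k)
    (hr : r ≤ 2 * m) (hB : ∀ v ∉ W, v ∈ B ↔ rep v ∈ blueSet j t S) (hBc : 0 < #Bᶜ) :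
    |torusP2 m k Bᶜ - ((2 * (m : ℝ) - r) / (2 * m)) ^ 2|
      ≤ (((2 * m + 1) * #W + (2 * m + 2) * k ^ (m - 1) : ℕ) : ℝ) / #Bᶜ := by
  have hm : (m : ℝ) ≠ 0 := by have := j.pos; positivity
  have := abs_torusP2_sub_le (T := Bᶜ) (Bad := nbhd W ∪ defectSet j t) (d := fun _ => 2 * m - r)
    (fun v hv hbad => torusDegIn_compl_of_notMem hS hk hB (mem_compl.1 hv)
      (fun h => hbad (mem_union_left _ h)) (fun h => hbad (mem_union_right _ h)))
    (fun v _ => Nat.sub_le _ _)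
  rw [sum_const, nsmul_eq_mul, Nat.cast_sub hr, mul_div_mul_left _ _ (by positivity),
    ← div_pow] at this
  push_cast at this
  refine this.trans (div_le_div_of_nonneg_right ?_ (by positivity))
  exact_mod_cast card_nbhd_union_defectSet_le

lemma mem_union_iff_mem_blueSet {X : Finset (Fin m → ZMod k)} {v : Fin m → ZMod k}
    (hv : v ∉ symmDiff X ({v | t ≤ rep v j ∧ rep v ∈ S} : Finset (Fin m → ZMod k))) :
    v ∈ ({v | rep v j < t} : Finset (Fin m → ZMod k)) ∪ X ↔ rep v ∈ blueSet j t S := by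
  have hX : v ∈ X ↔ t ≤ rep v j ∧ rep v ∈ S := by
    by_contra h
    exact hv (by rw [mem_symmDiff]; simp only [mem_filter, mem_univ, true_and]; tauto)
  simp only [mem_union, mem_filter, mem_univ, true_and, hX, blueSet, Set.mem_ofPred_eq]
  by_cases h : rep v j < t
  · simp [h]
  · simp [h, not_lt.1 h]

end Colouring

lemma exists_agreeing_colouring {m r k : ℕ} {S : Set (Fin m → ℤ)} (hS : IsIndepExactCover m r S)
    (hr : r ≤ 2 * m) (j : Fin m) [NeZero k] {K : ℕ} (hk : k = 4 * m * K) :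
    ∃ B W : Finset (Fin m → ZMod k),
      #B = 2 * m * K * k ^ (m - 1) ∧
      #{v : Fin m → ZMod k | rep v j < ((2 * m - r) * K : ℕ)} = (2 * m - r) * K * k ^ (m - 1) ∧
      #W ≤ 2 * m * k ^ (m - 1) ∧
      (∀ v ∉ W, v ∈ B ↔ rep v ∈ blueSet j ((2 * m - r) * K : ℕ) S) ∧
      (∀ v, rep v j < ((2 * m - r) * K : ℕ) → v ∈ B) := by
  set N := k ^ (m - 1)
  set t := (2 * m - r) * K
  have hkt : k - t = (2 * m + r) * K := by
    rw [hk, show 4 * m = 2 * m - r + (2 * m + r) by omega, add_mul, add_mul,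
      Nat.add_sub_cancel_left]
  have hL := card_filter_rep_lt (k := k) (t := t) j
    (by rw [hk]; exact Nat.mul_le_mul_right _ (by omega))
  set A : Finset (Fin m → ZMod k) := {v | t ≤ rep v j ∧ rep v ∈ S}
  obtain ⟨X, hXU, hX, hW⟩ := exists_subset_card_eq_card_symmDiff_le
    (A := A) (U := {v | t ≤ rep v j}) (fun v hv => by simp only [A, mem_filter] at hv ⊢; tauto)
    (n := r * K * N) (by rw [card_filter_le_rep, hkt]; gcongr; omega)
  refine ⟨({v | rep v j < t} : Finset (Fin m → ZMod k)) ∪ X, symmDiff X A, ?_, hL, ?_,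
    fun v hv => mem_union_iff_mem_blueSet hv, fun v hv => mem_union_left _ (by simpa using hv)⟩
  · rw [card_union_of_disjoint, hL, hX]
    · rw [← add_mul, ← add_mul, Nat.sub_add_cancel hr]
    · refine disjoint_left.2 fun v hvL hvX => ?_
      have := hXU hvX
      simp only [mem_filter, mem_univ, true_and] at hvL this
      omega
  · exact_mod_cast hW.trans (hS.abs_card_filter_le_rep_sub_le hr j hkt)

lemma exists_balanced_colouring {m r k : ℕ} {S : Set (Fin m → ℤ)} (hS : IsIndepExactCover m r S)
    (hr : r ≤ 2 * m) (j : Fin m) [NeZero k] {K : ℕ} (hk : k = 4 * m * K) :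
    ∃ B : Finset (Fin m → ZMod k), #Bᶜ = #B ∧
      |torusP2 m k Bᶜ - ((2 * (m : ℝ) - r) / (2 * m)) ^ 2| ≤ 5 * (m : ℝ) / K ∧
      |torusP2 m k B - (2 * (m : ℝ) - r) / (2 * m)| ≤ 5 * (m : ℝ) / K := by
  obtain ⟨B, W, hB, hL, hW, hagree, hlow⟩ := exists_agreeing_colouring hS hr j hk
  have hm := j.pos
  have hK : 0 < K := Nat.pos_of_mul_pos_left (hk ▸ NeZero.pos k)
  have hk3 : 3 ≤ k := by rw [hk]; nlinarith
  set N := k ^ (m - 1)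
  have hBc : #Bᶜ = #B := by
    have hkm : k ^ m = k * N := by rw [← pow_succ']; congr 1; omega
    rw [card_compl, Fintype.card_fun, ZMod.card, Fintype.card_fin, hB, hkm, hk,
      show 4 * m * K * N = 2 * m * K * N + 2 * m * K * N by ring, Nat.add_sub_cancel]
  have herr : (((2 * m + 1) * #W + (2 * m + 2) * N : ℕ) : ℝ) / #B ≤ 5 * (m : ℝ) / K := by
    have hE : (2 * m + 1) * #W + (2 * m + 2) * N ≤ 10 * m ^ 2 * N :=
      calc (2 * m + 1) * #W + (2 * m + 2) * N ≤ (2 * m + 1) * (2 * m * N) + (2 * m + 2) * N :=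
            Nat.add_le_add_right (Nat.mul_le_mul_left _ hW) _
        _ = (4 * m ^ 2 + 4 * m + 2) * N := by ring
        _ ≤ 10 * m ^ 2 * N := by gcongr; nlinarith
    rw [hB, div_le_div_iff₀ (by positivity) (by positivity)]
    calc (((2 * m + 1) * #W + (2 * m + 2) * N : ℕ) : ℝ) * K ≤ (10 * m ^ 2 * N : ℕ) * K := by
          gcongr
      _ = 5 * m * ((2 * m * K * N : ℕ) : ℝ) := by push_cast; ring
  have hblue : (2 * (m : ℝ) - r) / (2 * m)
      = #{v : Fin m → ZMod k | rep v j < ((2 * m - r) * K : ℕ)} / #B := by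
    have hN : (N : ℝ) ≠ 0 := by positivity
    rw [hL, hB]
    push_cast [Nat.cast_sub hr]
    field_simp
  refine ⟨B, hBc, ?_, ?_⟩
  · exact (abs_torusP2_compl_sub_of_agree_le hS hk3 hr hagree (by rw [hBc, hB]; positivity)).trans
      (hBc ▸ herr)
  · rw [hblue]
    exact (abs_torusP2_sub_of_agree_le hS hk3 hagree hlow).trans herr

/-- If an independent exact `r`-cover of `ℤ^m` exists, then
`(((2m−r)/(2m))², (2m−r)/(2m)) ∈ 𝒫(𝒯^m)`. -/
theorem cover_gives_point (m r : ℕ) (hm : 2 ≤ m) (hr : r ≤ 2 * m)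
    (h : ∃ S : Set (Fin m → ℤ), IsIndepExactCover m r S) :
    (((2 * (m : ℝ) - r) / (2 * m)) ^ 2, (2 * (m : ℝ) - r) / (2 * m)) ∈ torusP m := by
  obtain ⟨S, hS⟩ := h
  intro ε hε
  obtain ⟨K, hK⟩ := exists_nat_gt (5 * m / ε)
  have hKpos : (0 : ℝ) < K := (div_pos (by positivity) hε).trans hK
  have herr : 5 * m / K < ε := by rwa [div_lt_comm₀ hKpos hε]
  have hK0 : 0 < K := by exact_mod_cast hKpos
  have : NeZero (4 * m * K) := ⟨by positivity⟩
  obtain ⟨B, hcard, hred, hblue⟩ := exists_balanced_colouring hS hr ⟨0, by omega⟩ (K := K) rfl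
  refine ⟨4 * m * K, by positivity, ?_, Bᶜ, B, fun v => (em (v ∈ B)).symm.imp_left mem_compl.2,
    disjoint_compl_left, hcard, hred.trans_lt herr, hblue.trans_lt herr⟩
  exact Nat.even_pow.2 ⟨⟨2 * m * K, by ring⟩, by omega⟩
end

section
/- For every m ≥ 2, the set S_1 = { (x_1,…,x_m) ∈ ℤ^m : Σ_{i=1}^m i·x_i ≡ 0 (mod 2m+1) } is an independent exact 1-cover of the grid graph ℤ^m: S_1 is an independent set and every vertex of ℤ^m not in S_1 has exactly one neighbour in S_1. -/
open Function

namespace GridCover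

variable {m : ℕ}

lemma gridAdj_iff {x y : Fin m → ℤ} :
    gridAdj m x y ↔ ∃ j, ∃ ε : ℤ, (ε = 1 ∨ ε = -1) ∧ y = update x j (x j + ε) := by
  constructor
  · rintro ⟨j, hj, hy⟩
    refine ⟨j, y j - x j, by omega, ?_⟩
    exact (update_eq_iff.2 ⟨by ring, fun i hi => (hy i hi).symm⟩).symm
  · rintro ⟨j, ε, hε, rfl⟩
    exact ⟨j, by simp only [update_self]; omega, fun i hi => update_of_ne hi _ _⟩

def weightedSum (x : Fin m → ℤ) : ℤ :=
  ∑ i : Fin m, ((i : ℤ) + 1) * x i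

lemma weightedSum_update_add (x : Fin m → ℤ) (j : Fin m) (ε : ℤ) :
    weightedSum (update x j (x j + ε)) = weightedSum x + ((j : ℤ) + 1) * ε := by
  rw [← sub_eq_iff_eq_add', weightedSum, weightedSum, ← Finset.sum_sub_distrib,
    Finset.sum_eq_single j (fun i _ hi => by rw [update_of_ne hi, sub_self])
      (by simp)]
  simp only [update_self]
  ring

lemma step_ne_zero (j : Fin m) {ε : ℤ} (hε : ε = 1 ∨ ε = -1) : ((j : ℤ) + 1) * ε ≠ 0 := by
  rcases hε with rfl | rfl <;> omega

lemma abs_step_le (j : Fin m) {ε : ℤ} (hε : ε = 1 ∨ ε = -1) : |((j : ℤ) + 1) * ε| ≤ m := by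
  have := j.isLt
  rcases hε with rfl | rfl <;> simp only [mul_one, mul_neg, abs_neg] <;>
    rw [abs_of_nonneg (by positivity)] <;> omega

lemma step_injective {j j' : Fin m} {ε ε' : ℤ} (hε : ε = 1 ∨ ε = -1) (hε' : ε' = 1 ∨ ε' = -1)
    (h : ((j : ℤ) + 1) * ε = ((j' : ℤ) + 1) * ε') : j = j' ∧ ε = ε' := by
  rcases hε with rfl | rfl <;> rcases hε' with rfl | rfl <;> constructor <;> omega

lemma exists_step_eq {a : ℤ} (ha : a ≠ 0) (ham : |a| ≤ m) :
    ∃ j : Fin m, ∃ ε : ℤ, (ε = 1 ∨ ε = -1) ∧ ((j : ℤ) + 1) * ε = a := by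
  rw [Int.abs_eq_natAbs] at ham
  rcases ha.lt_or_gt with ha | ha
  · exact ⟨⟨a.natAbs - 1, by omega⟩, -1, by omega, by dsimp only; omega⟩
  · exact ⟨⟨a.natAbs - 1, by omega⟩, 1, by omega, by dsimp only; omega⟩

lemma not_dvd_step (j : Fin m) {ε : ℤ} (hε : ε = 1 ∨ ε = -1) :
    ¬ (2 * (m : ℤ) + 1) ∣ ((j : ℤ) + 1) * ε := fun h =>
  step_ne_zero j hε (Int.eq_zero_of_abs_lt_dvd h (by linarith [abs_step_le j hε]))

lemma step_eq_of_dvd_sub {j j' : Fin m} {ε ε' : ℤ} (hε : ε = 1 ∨ ε = -1)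
    (hε' : ε' = 1 ∨ ε' = -1) (h : (2 * (m : ℤ) + 1) ∣ ((j : ℤ) + 1) * ε - ((j' : ℤ) + 1) * ε') :
    j = j' ∧ ε = ε' := by
  have hsub : |((j : ℤ) + 1) * ε - ((j' : ℤ) + 1) * ε'| < 2 * m + 1 := by
    linarith [abs_sub (((j : ℤ) + 1) * ε) (((j' : ℤ) + 1) * ε'), abs_step_le j hε,
      abs_step_le j' hε']
  exact step_injective hε hε' (sub_eq_zero.1 (Int.eq_zero_of_abs_lt_dvd h hsub))

lemma exists_step_dvd_add {s : ℤ} (hs : ¬ (2 * (m : ℤ) + 1) ∣ s) :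
    ∃ j : Fin m, ∃ ε : ℤ, (ε = 1 ∨ ε = -1) ∧ (2 * (m : ℤ) + 1) ∣ s + ((j : ℤ) + 1) * ε := by
  have hn : ((2 * m + 1 : ℕ) : ℤ) = 2 * (m : ℤ) + 1 := by push_cast; ring
  set b := s.bmod (2 * m + 1)
  have hb0 : b ≠ 0 := fun h => hs (hn ▸ Int.dvd_of_bmod_eq_zero h)
  have hbm : |b| ≤ m := by
    have := Int.le_bmod (x := s) (m := 2 * m + 1) (by omega)
    have := Int.bmod_le (x := s) (m := 2 * m + 1) (by omega)
    rw [abs_le]; constructor <;> omega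
  obtain ⟨j, ε, hε, hstep⟩ := exists_step_eq (neg_ne_zero.2 hb0) (by rwa [abs_neg])
  exact ⟨j, ε, hε, by rw [hstep, ← sub_eq_add_neg, ← hn]; exact Int.dvd_self_sub_bmod⟩

end GridCover

open GridCover in
theorem exact_one_cover_general (m : ℕ) :
    IsIndepExactCover m 1
      {x : Fin m → ℤ | (2 * (m : ℤ) + 1) ∣ ∑ i : Fin m, ((i.val : ℤ) + 1) * x i} := by
  change IsIndepExactCover m 1 {x | (2 * (m : ℤ) + 1) ∣ weightedSum x}
  refine ⟨fun x hx y hy hxy => ?_, fun x hx => ?_⟩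
  · obtain ⟨j, ε, hε, rfl⟩ := gridAdj_iff.1 hxy
    rw [Set.mem_ofPred_eq, weightedSum_update_add, dvd_add_right hx] at hy
    exact not_dvd_step j hε hy
  · obtain ⟨j, ε, hε, hdvd⟩ := exists_step_dvd_add hx
    refine Set.ncard_eq_one.2 ⟨update x j (x j + ε), Set.eq_singleton_iff_unique_mem.2
      ⟨⟨by rwa [Set.mem_ofPred_eq, weightedSum_update_add], gridAdj_iff.2 ⟨j, ε, hε, rfl⟩⟩, ?_⟩⟩
    rintro y ⟨hy, hxy⟩
    obtain ⟨j', ε', hε', rfl⟩ := gridAdj_iff.1 hxy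
    rw [Set.mem_ofPred_eq, weightedSum_update_add] at hy
    obtain ⟨rfl, rfl⟩ := step_eq_of_dvd_sub hε' hε (by simpa using dvd_sub hy hdvd)
    rfl

/-- For every `m ≥ 2`, the set `S₁ = {x ∈ ℤ^m : ∑ i·xᵢ ≡ 0 (mod 2m+1)}` (coordinates
weighted `1,…,m`) is an independent exact `1`-cover of the grid graph `ℤ^m`. -/
theorem exact_one_cover (m : ℕ) (hm : 2 ≤ m) :
    IsIndepExactCover m 1
      {x : Fin m → ℤ | (2 * (m : ℤ) + 1) ∣ ∑ i : Fin m, ((i.val : ℤ) + 1) * x i} :=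
  exact_one_cover_general m
end

section
/- For every m ≥ 2, the set S_m = { (x_1,…,x_m) ∈ ℤ^m : Σ_{i=1}^m x_i ≡ 0 (mod 3) } is an independent exact m-cover of the grid graph ℤ^m: S_m is an independent set and every vertex of ℤ^m not in S_m has exactly m neighbours in S_m. -/
/-!
A grid step changes the coordinate sum by exactly `±1`, so no two points of `S_m` are adjacent.
If `∑ xᵢ ≢ 0 (mod 3)`, exactly one sign `ε ∈ {1, -1}` makes `∑ xᵢ + ε ≡ 0`, and the neighbours
of `x` in `S_m` are the `m` points `x + ε eⱼ`, one for each coordinate `j`.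
-/

lemma gridAdj_iff_exists_add_single {m : ℕ} {x y : Fin m → ℤ} :
    gridAdj m x y ↔ ∃ j ε, (ε = 1 ∨ ε = -1) ∧ y = x + Pi.single j ε := by
  constructor
  · rintro ⟨j, hj, hother⟩
    refine ⟨j, y j - x j, by omega, funext fun i => ?_⟩
    by_cases hi : i = j
    · subst hi; simp
    · simp [Pi.single_eq_of_ne hi, hother i hi]
  · rintro ⟨j, ε, hε, rfl⟩
    exact ⟨j, by simp; omega, fun i hi => by simp [Pi.single_eq_of_ne hi]⟩

lemma sum_add_single {ι M : Type*} [Fintype ι] [DecidableEq ι] [AddCommMonoid M]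
    (x : ι → M) (j : ι) (ε : M) : ∑ i, (x + Pi.single j ε : ι → M) i = ∑ i, x i + ε := by
  simp [Finset.sum_add_distrib]

lemma add_single_left_injective {ι M : Type*} [DecidableEq ι] [AddCommGroup M]
    (x : ι → M) {ε : M} (hε : ε ≠ 0) : Function.Injective fun j => x + Pi.single j ε := by
  intro a b hab
  by_contra hne
  have := congrFun (add_left_cancel hab) a
  simp [Pi.single_eq_of_ne hne] at this
  exact hε this

lemma setOf_dvd_sum_gridAdj_eq_range {m : ℕ} {x : Fin m → ℤ} {ε : ℤ} (hε : ε = 1 ∨ ε = -1)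
    (h : 3 ∣ ∑ i, x i + ε) :
    {y | 3 ∣ ∑ i, y i ∧ gridAdj m x y} = Set.range fun j => x + Pi.single j ε := by
  ext y
  simp only [Set.mem_ofPred_eq, Set.mem_range, gridAdj_iff_exists_add_single]
  constructor
  · rintro ⟨hy, j, δ, hδ, rfl⟩
    rw [sum_add_single] at hy
    obtain rfl : δ = ε := by omega
    exact ⟨j, rfl⟩
  · rintro ⟨j, rfl⟩
    exact ⟨by rwa [sum_add_single], j, ε, hε, rfl⟩

theorem exact_m_cover_general (m : ℕ) :
    IsIndepExactCover m m
      {x : Fin m → ℤ | (3 : ℤ) ∣ ∑ i, x i} := by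
  simp only [IsIndepExactCover, Set.mem_ofPred_eq]
  refine ⟨?_, fun x hx => ?_⟩
  · intro x hx y hy hadj
    obtain ⟨j, ε, hε, rfl⟩ := gridAdj_iff_exists_add_single.mp hadj
    rw [sum_add_single] at hy
    omega
  · obtain ⟨ε, hε, h⟩ : ∃ ε : ℤ, (ε = 1 ∨ ε = -1) ∧ 3 ∣ ∑ i, x i + ε := by
      by_cases h : 3 ∣ ∑ i, x i + 1
      exacts [⟨1, by omega, h⟩, ⟨-1, by omega, by omega⟩]
    rw [setOf_dvd_sum_gridAdj_eq_range hε h,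
      Set.ncard_range_of_injective (add_single_left_injective x (by omega)), Nat.card_eq_fintype_card,
      Fintype.card_fin]

/-- For every `m ≥ 2`, the set `S_m = {x ∈ ℤ^m : ∑ xᵢ ≡ 0 (mod 3)}` is an independent
exact `m`-cover of the grid graph `ℤ^m`. -/
theorem exact_m_cover (m : ℕ) (hm : 2 ≤ m) :
    IsIndepExactCover m m
      {x : Fin m → ℤ | (3 : ℤ) ∣ ∑ i, x i} :=
  exact_m_cover_general m
end

section
/- Let m ≥ 2, 0 ≤ r ≤ 2m, and λ ≥ 1 be integers. If an independent exact r-cover of the grid graph ℤ^m exists, then an independent exact λr-cover of the grid graph ℤ^{λm} exists. Concretely, if S ⊆ ℤ^m is an independent exact r-cover and f : ℤ^{λm} → ℤ^m maps (x_1,…,x_{λm}) to the vector whose k-th coordinate is Σ_{i=λ(k−1)+1}^{λk} x_i, then S' = f^{-1}(S) is an independent exact λr-cover of ℤ^{λm}. -/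
/-- Splitting the coordinates of `ℤ^(L·m)` into `m` consecutive blocks of length `L` and
summing within each block: the `k`-th coordinate of `f x` is the sum of the coordinates
of `x` in the `k`-th block. -/
noncomputable def blockSum (m L : ℕ) (x : Fin (L * m) → ℤ) : Fin m → ℤ :=
  fun k => ∑ i ∈ Finset.univ.filter (fun i : Fin (L * m) => i.val / L = k.val), x i


/-!
The block-sum map `f` is additive and sends the unit step `±eⱼ` of `ℤ^(L·m)` to the unit step
`±eₖ` of `ℤ^m`, where `k` is the block containing `j`. So `f` maps grid edges to grid edges,
which makes `f⁻¹(S)` independent; and the neighbours of `x` in `f⁻¹(S)` are the steps `(j, ±1)`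
whose image step `(k, ±1)` leads from `f x` into `S`. Each of the `r` such image steps has
exactly `L` preimages, one for each coordinate of block `k`.
-/

open Function

theorem Set.ncard_preimage_of_ncard_fiber {α β : Type*} [Finite α] (g : α → β) {c : ℕ}
    (hg : ∀ b, (g ⁻¹' {b}).ncard = c) {T : Set β} (hT : T.Finite) :
    (g ⁻¹' T).ncard = c * T.ncard := by
  induction T, hT using Set.Finite.induction_on with
  | empty => simp
  | @insert b T hbT hT ih =>
    have hdisj : Disjoint (g ⁻¹' {b}) (g ⁻¹' T) :=
      (Set.disjoint_singleton_left.2 hbT).preimage g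
    rw [Set.ncard_insert_of_notMem hbT hT, ← Set.singleton_union, Set.preimage_union,
      Set.ncard_union_eq hdisj, hg, ih]
    ring

/-- The grid neighbour of `x` one step along axis `p.1`, in direction `p.2 ∈ ℤˣ = {1, -1}`. -/
def gridNeighbor {n : ℕ} (x : Fin n → ℤ) (p : Fin n × ℤˣ) : Fin n → ℤ :=
  x + Pi.single p.1 (p.2 : ℤ)

theorem gridAdj_iff_exists_gridNeighbor {n : ℕ} {x y : Fin n → ℤ} :
    gridAdj n x y ↔ ∃ p, gridNeighbor x p = y := by
  constructor
  · rintro ⟨j, hj, hoff⟩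
    obtain ⟨s, hs⟩ : ∃ s : ℤˣ, y j = x j + s := by
      rcases hj with h | h
      · exact ⟨1, by simp [h]⟩
      · exact ⟨-1, by simp [h, sub_eq_add_neg]⟩
    refine ⟨(j, s), funext fun i => ?_⟩
    by_cases hij : i = j
    · subst hij; simp [gridNeighbor, hs]
    · simp [gridNeighbor, hij, hoff i hij]
  · rintro ⟨⟨j, s⟩, rfl⟩
    refine ⟨j, ?_, fun i hi => by simp [gridNeighbor, hi]⟩
    rcases Int.units_eq_one_or s with rfl | rfl <;> simp [gridNeighbor, sub_eq_add_neg]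

theorem gridNeighbor_injective {n : ℕ} (x : Fin n → ℤ) : Injective (gridNeighbor x) := by
  rintro ⟨j, s⟩ ⟨j', s'⟩ h
  simp only [gridNeighbor, add_right_inj] at h
  obtain rfl : j = j' := by
    by_contra hne
    simpa [hne] using congrFun h j
  simpa [Units.ext_iff] using Pi.single_injective j h

theorem ncard_gridAdj_eq {n : ℕ} (S : Set (Fin n → ℤ)) (x : Fin n → ℤ) :
    {y | y ∈ S ∧ gridAdj n x y}.ncard = (gridNeighbor x ⁻¹' S).ncard := by
  have himage : {y | y ∈ S ∧ gridAdj n x y} = gridNeighbor x '' (gridNeighbor x ⁻¹' S) := by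
    ext y
    simp only [gridAdj_iff_exists_gridNeighbor, Set.mem_ofPred_eq, Set.mem_image,
      Set.mem_preimage]
    constructor
    · rintro ⟨hy, p, rfl⟩; exact ⟨p, hy, rfl⟩
    · rintro ⟨p, hp, rfl⟩; exact ⟨hp, p, rfl⟩
  rw [himage, Set.ncard_image_of_injective _ (gridNeighbor_injective x)]

def blockIndex (m L : ℕ) (j : Fin (L * m)) : Fin m := ⟨j / L, Nat.div_lt_of_lt_mul j.2⟩

theorem ncard_blockIndex_preimage_singleton (m L : ℕ) (k : Fin m) :
    (blockIndex m L ⁻¹' {k}).ncard = L := by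
  rcases Nat.eq_zero_or_pos L with rfl | hL
  · have : IsEmpty (Fin (0 * m)) := by rw [Nat.zero_mul]; infer_instance
    simp [Set.eq_empty_of_isEmpty]
  have hfiber : blockIndex m L ⁻¹' {k} = Fin.val ⁻¹' Set.Ico (k * L) (k * L + L) := by
    ext j
    simp only [Set.mem_preimage, Set.mem_singleton_iff, blockIndex, Fin.ext_iff,
      Nat.div_eq_iff hL, Set.mem_Ico]
    omega
  have hsub : Set.Ico (k * L) (k * L + L) ⊆ Set.range (Fin.val : Fin (L * m) → ℕ) := by
    intro i hi
    have hk := k.2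
    rw [Set.mem_Ico] at hi
    exact ⟨⟨i, by nlinarith⟩, rfl⟩
  rw [hfiber, Set.ncard_preimage_of_injective_subset_range Fin.val_injective hsub,
    Set.ncard_Ico_nat]
  omega

theorem blockSum_add (m L : ℕ) (x y : Fin (L * m) → ℤ) :
    blockSum m L (x + y) = blockSum m L x + blockSum m L y := by
  funext k
  simp only [blockSum, Pi.add_apply, Finset.sum_add_distrib]

theorem blockSum_single (m L : ℕ) (j : Fin (L * m)) (a : ℤ) :
    blockSum m L (Pi.single j a) = Pi.single (blockIndex m L j) a := by
  funext k
  rw [blockSum, Finset.sum_pi_single']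
  simp [Pi.single_apply, blockIndex, Fin.ext_iff, eq_comm]

theorem blockSum_gridNeighbor (m L : ℕ) (x : Fin (L * m) → ℤ) (p : Fin (L * m) × ℤˣ) :
    blockSum m L (gridNeighbor x p) =
      gridNeighbor (blockSum m L x) (Prod.map (blockIndex m L) id p) := by
  rw [gridNeighbor, blockSum_add, blockSum_single]
  rfl

theorem gridAdj_blockSum {m L : ℕ} {x y : Fin (L * m) → ℤ} (h : gridAdj (L * m) x y) :
    gridAdj m (blockSum m L x) (blockSum m L y) := by
  obtain ⟨p, rfl⟩ := gridAdj_iff_exists_gridNeighbor.1 h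
  exact gridAdj_iff_exists_gridNeighbor.2 ⟨_, (blockSum_gridNeighbor m L x p).symm⟩

theorem cover_scaling_general (m r L : ℕ)
    (S : Set (Fin m → ℤ)) (hS : IsIndepExactCover m r S) :
    IsIndepExactCover (L * m) (L * r) (blockSum m L ⁻¹' S) := by
  obtain ⟨hindep, hcover⟩ := hS
  refine ⟨fun x hx y hy hxy => hindep _ hx _ hy (gridAdj_blockSum hxy), fun x hx => ?_⟩
  have hpreimage : gridNeighbor x ⁻¹' (blockSum m L ⁻¹' S) =
      Prod.map (blockIndex m L) id ⁻¹' (gridNeighbor (blockSum m L x) ⁻¹' S) := by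
    ext p
    simp only [Set.mem_preimage, blockSum_gridNeighbor]
  have hfiber (q : Fin m × ℤˣ) : (Prod.map (blockIndex m L) id ⁻¹' {q}).ncard = L := by
    rw [← Set.singleton_prod_singleton, Set.preimage_prod_map_prod, Set.ncard_prod,
      ncard_blockIndex_preimage_singleton, Set.preimage_id, Set.ncard_singleton, mul_one]
  rw [ncard_gridAdj_eq, hpreimage, Set.ncard_preimage_of_ncard_fiber _ hfiber (Set.toFinite _),
    ← ncard_gridAdj_eq, hcover _ hx]

/-- If `S ⊆ ℤ^m` is an independent exact `r`-cover, then its preimage under the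
block-sum map is an independent exact `L·r`-cover of `ℤ^(L·m)`. -/
theorem cover_scaling (m r L : ℕ) (hm : 2 ≤ m) (hr : r ≤ 2 * m) (hL : 1 ≤ L)
    (S : Set (Fin m → ℤ)) (hS : IsIndepExactCover m r S) :
    IsIndepExactCover (L * m) (L * r) (blockSum m L ⁻¹' S) :=
  cover_scaling_general m r L S hS
end
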